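/- arXiv:1001.2205 — 8 statements merged into one kernel-verified Lean document; each statement's English description precedes it below -/
import Mathlib

section
/- Let A be a countably infinite type and w : A → ℝ a weight function with w(a) > 0 for all a, such that for every t ∈ ℝ the set {a : A | w(a) ≤ t} is finite. Let ν : ℕ → ℝ be the strictly increasing enumeration of the set Ω = {w(a) | a ∈ A} of distinct weights, and let N(νᵢ) be the (finite) number of a ∈ A with w(a) = νᵢ. Suppose the set {s ∈ ℝ | the family (exp(−w(a)·s))_{a∈A} is summable} is nonempty and bounded below, and let Q be its infimum (the abscissa of convergence of the generating function G_A(s) = Σ_{a∈A} exp(−w(a)·s)). Then the combinatorial capacity C := limsup_{k→∞} ln(Σ_{i=1}^{k} N(νᵢ)) / ν_k equals Q. -/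
/-!
Write `S k = N 0 + ⋯ + N k` and group the series `G_A(s)` by weight into
`∑ᵢ N i e^{-νᵢ s}`. If this converges then `S k e^{-ν_k s} ≤ G_A(s)`, so
`log S k / ν_k ≤ s + log G_A(s) / ν_k` and `C ≤ s`. Conversely, if `S k ≤ e^{c ν_k}` eventually
with `0 ≤ c < s`, summation by parts bounds the partial sums of `∑ᵢ N i e^{-νᵢ s}` by a
telescoping sum of `s / (s - c) · (e^{-νₖ (s - c)} - e^{-νₖ₊₁ (s - c)})`, so `G_A(s)` converges
and `Q ≤ s`.
-/

open Filter Topology Real Finset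

namespace Real

-- Bernoulli's inequality for `(e^{-xd})^{s/d}`.
lemma one_sub_exp_neg_mul_le {d s : ℝ} (x : ℝ) (hd : 0 < d) (hds : d ≤ s) :
    1 - exp (-x * s) ≤ s / d * (1 - exp (-x * d)) := by
  have hbern := one_add_mul_self_le_rpow_one_add (s := exp (-x * d) - 1)
    (by linarith [exp_pos (-x * d)]) ((one_le_div hd).2 hds)
  rw [add_sub_cancel, ← exp_mul, show -x * d * (s / d) = -x * s by field_simp] at hbern
  linarith

lemma exp_mul_mul_sub_le {c s : ℝ} (a b : ℝ) (hc : 0 ≤ c) (hcs : c < s) :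
    exp (c * a) * (exp (-a * s) - exp (-b * s))
      ≤ s / (s - c) * (exp (-a * (s - c)) - exp (-b * (s - c))) := by
  have h := one_sub_exp_neg_mul_le (b - a) (sub_pos.2 hcs) (sub_le_self s hc)
  have hs : exp (c * a) * (exp (-a * s) - exp (-b * s))
      = exp (-a * (s - c)) * (1 - exp (-(b - a) * s)) := by
    rw [mul_one_sub, mul_sub, ← exp_add, ← exp_add, ← exp_add]; ring_nf
  have hsc : exp (-a * (s - c)) - exp (-b * (s - c))
      = exp (-a * (s - c)) * (1 - exp (-(b - a) * (s - c))) := by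
    rw [mul_one_sub, ← exp_add]; ring_nf
  rw [hs, hsc, mul_left_comm]
  exact mul_le_mul_of_nonneg_left h (exp_pos _).le

end Real

section DirichletSeries

variable {ν N : ℕ → ℝ}

lemma one_le_sum_range_succ (hN : ∀ i, 1 ≤ N i) (k : ℕ) : 1 ≤ ∑ i ∈ range (k + 1), N i :=
  (hN k).trans <| single_le_sum (fun i _ => zero_le_one.trans (hN i)) (self_mem_range_succ k)

lemma sum_range_mul_exp_neg_le (hν : Monotone ν) (hN : ∀ i, 0 ≤ N i) {c s : ℝ} (hc : 0 ≤ c)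
    (hcs : c < s) {m : ℕ} (hS : ∀ k ≥ m, ∑ i ∈ range (k + 1), N i ≤ exp (c * ν k))
    {k : ℕ} (hk : m ≤ k) :
    ∑ i ∈ range (k + 1), N i * exp (-ν i * s)
      ≤ ∑ i ∈ range (m + 1), N i * exp (-ν i * s) + (∑ i ∈ range (k + 1), N i) * exp (-ν k * s)
        + s / (s - c) * (exp (-ν m * (s - c)) - exp (-ν k * (s - c))) := by
  induction k, hk using Nat.le_induction with
  | base =>
    have := mul_nonneg (sum_nonneg (s := range (m + 1)) fun i _ => hN i) (exp_pos (-ν m * s)).le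
    linarith
  | succ n hn ih =>
    have hdecr : exp (-ν (n + 1) * s) ≤ exp (-ν n * s) :=
      exp_le_exp.2 (by nlinarith [hν n.le_succ])
    have hstep := (mul_le_mul_of_nonneg_right (hS n hn) (sub_nonneg.2 hdecr)).trans
      (exp_mul_mul_sub_le (ν n) (ν (n + 1)) hc hcs)
    rw [sum_range_succ _ (n + 1), sum_range_succ _ (n + 1)]
    linarith

lemma summable_mul_exp_neg_of_sum_range_le (hν : Monotone ν) (hν0 : ∀ k, 0 ≤ ν k)
    (hN : ∀ i, 0 ≤ N i) {c s : ℝ} (hc : 0 ≤ c) (hcs : c < s)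
    (hS : ∀ᶠ k in atTop, ∑ i ∈ range (k + 1), N i ≤ exp (c * ν k)) :
    Summable fun i => N i * exp (-ν i * s) := by
  obtain ⟨m, hm⟩ := eventually_atTop.1 hS
  have hterm : ∀ i, 0 ≤ N i * exp (-ν i * s) := fun i => mul_nonneg (hN i) (exp_pos _).le
  refine summable_of_sum_range_le hterm
    (c := ∑ i ∈ range (m + 1), N i * exp (-ν i * s) + 1 + s / (s - c)) fun n => ?_
  have hk : m ≤ max m n := le_max_left _ _
  set k := max m n
  have hlast : (∑ i ∈ range (k + 1), N i) * exp (-ν k * s) ≤ 1 := calc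
    _ ≤ exp (c * ν k) * exp (-ν k * s) := mul_le_mul_of_nonneg_right (hm k hk) (exp_pos _).le
    _ = exp (-ν k * (s - c)) := by rw [← exp_add]; ring_nf
    _ ≤ 1 := exp_le_one_iff.2 (by nlinarith [hν0 k])
  have htel : exp (-ν m * (s - c)) - exp (-ν k * (s - c)) ≤ 1 := by
    linarith [exp_le_one_iff.2 (by nlinarith [hν0 m] : -ν m * (s - c) ≤ 0),
      exp_pos (-ν k * (s - c))]
  calc ∑ i ∈ range n, N i * exp (-ν i * s) ≤ ∑ i ∈ range (k + 1), N i * exp (-ν i * s) :=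
        sum_le_sum_of_subset_of_nonneg (range_subset_range.2 (by omega)) fun i _ _ => hterm i
    _ ≤ _ := sum_range_mul_exp_neg_le hν hN hc hcs hm hk
    _ ≤ _ := add_le_add (add_le_add_right hlast _)
        (mul_le_of_le_one_right (div_nonneg (by linarith) (by linarith)) htel)

lemma pos_of_summable_mul_exp_neg (hν0 : ∀ k, 0 < ν k) (hN : ∀ i, 1 ≤ N i) {s : ℝ}
    (hs : Summable fun i => N i * exp (-ν i * s)) : 0 < s := by
  by_contra! hs0
  obtain ⟨i, hi⟩ := (hs.tendsto_atTop_zero.eventually_lt_const one_pos).exists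
  have hexp : 1 ≤ exp (-ν i * s) := one_le_exp (by nlinarith [hν0 i])
  linarith [one_le_mul_of_one_le_of_one_le (hN i) hexp]

lemma tendsto_atTop_of_summable_mul_exp_neg (hN : ∀ i, 1 ≤ N i) {s : ℝ} (hs0 : 0 < s)
    (hs : Summable fun i => N i * exp (-ν i * s)) : Tendsto ν atTop atTop := by
  have hexp : Tendsto (fun i => exp (-ν i * s)) atTop (𝓝 0) :=
    squeeze_zero (fun i => (exp_pos _).le)
      (fun i => le_mul_of_one_le_left (exp_pos _).le (hN i)) hs.tendsto_atTop_zero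
  simp_rw [tendsto_exp_comp_nhds_zero, neg_mul, tendsto_neg_atBot_iff] at hexp
  exact (tendsto_mul_const_atTop_of_pos hs0).1 hexp

lemma sum_range_le_tsum_mul_exp (hν : Monotone ν) (hN : ∀ i, 0 ≤ N i) {s : ℝ} (hs0 : 0 ≤ s)
    (hs : Summable fun i => N i * exp (-ν i * s)) (k : ℕ) :
    ∑ i ∈ range (k + 1), N i ≤ (∑' i, N i * exp (-ν i * s)) * exp (ν k * s) := calc
  ∑ i ∈ range (k + 1), N i
      = (∑ i ∈ range (k + 1), N i * exp (-ν k * s)) * exp (ν k * s) := by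
        rw [← sum_mul, mul_assoc, ← exp_add]; simp
  _ ≤ (∑ i ∈ range (k + 1), N i * exp (-ν i * s)) * exp (ν k * s) := by
        gcongr with i hi
        · exact hN i
        · exact hν (Nat.lt_succ_iff.1 (mem_range.1 hi))
  _ ≤ _ := by gcongr; exact hs.sum_le_tsum _ fun i _ => mul_nonneg (hN i) (exp_pos _).le

lemma eventually_log_sum_range_div_lt (hν : Monotone ν) (hν0 : ∀ k, 0 < ν k)
    (hN : ∀ i, 1 ≤ N i) {s : ℝ} (hs : Summable fun i => N i * exp (-ν i * s)) {ε : ℝ}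
    (hε : 0 < ε) : ∀ᶠ k in atTop, log (∑ i ∈ range (k + 1), N i) / ν k < s + ε := by
  have hs0 := pos_of_summable_mul_exp_neg hν0 hN hs
  have hN0 : ∀ i, 0 ≤ N i := fun i => zero_le_one.trans (hN i)
  set G := ∑' i, N i * exp (-ν i * s)
  have hG : 0 < G := hs.tsum_pos (fun i => mul_nonneg (hN0 i) (exp_pos _).le) 0
    (mul_pos (zero_lt_one.trans_le (hN 0)) (exp_pos _))
  filter_upwards [(tendsto_const_nhds.div_atTop
    (tendsto_atTop_of_summable_mul_exp_neg hN hs0 hs)).eventually_lt_const hε] with k hk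
  have hlog : log (∑ i ∈ range (k + 1), N i) ≤ log G + ν k * s := by
    rw [← log_exp (ν k * s), ← log_mul hG.ne' (exp_pos _).ne']
    exact log_le_log (zero_lt_one.trans_le (one_le_sum_range_succ hN k))
      (sum_range_le_tsum_mul_exp hν hN0 hs0.le hs k)
  calc log (∑ i ∈ range (k + 1), N i) / ν k ≤ s + log G / ν k := by
        rw [div_le_iff₀ (hν0 k), add_mul, div_mul_cancel₀ _ (hν0 k).ne']; linarith only [hlog]
    _ < s + ε := by gcongr

theorem limsup_log_sum_range_div_eq_sInf (hν : Monotone ν) (hν0 : ∀ k, 0 < ν k)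
    (hN : ∀ i, 1 ≤ N i) (hne : {s | Summable fun i => N i * exp (-ν i * s)}.Nonempty) :
    limsup (fun k => log (∑ i ∈ range (k + 1), N i) / ν k) atTop
      = sInf {s | Summable fun i => N i * exp (-ν i * s)} := by
  set f := fun k => log (∑ i ∈ range (k + 1), N i) / ν k
  have hf0 : ∀ k, 0 ≤ f k := fun k =>
    div_nonneg (log_nonneg (one_le_sum_range_succ hN k)) (hν0 k).le
  obtain ⟨s₀, hs₀⟩ := hne
  have hbdd : IsBoundedUnder (· ≤ ·) atTop f := isBoundedUnder_of_eventually_le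
    ((eventually_log_sum_range_div_lt hν hν0 hN hs₀ one_pos).mono fun _ => le_of_lt)
  apply le_antisymm
  · refine le_csInf ⟨s₀, hs₀⟩ fun s hs => le_of_forall_pos_le_add fun ε hε => ?_
    exact limsup_le_of_le (isCoboundedUnder_le_of_le atTop hf0)
      ((eventually_log_sum_range_div_lt hν hν0 hN hs hε).mono fun _ => le_of_lt)
  · refine le_of_forall_pos_le_add fun ε hε => csInf_le
      ⟨0, fun s hs => (pos_of_summable_mul_exp_neg hν0 hN hs).le⟩ ?_
    have hC : 0 ≤ limsup f atTop := le_limsup_of_frequently_le (Frequently.of_forall hf0) hbdd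
    refine summable_mul_exp_neg_of_sum_range_le hν (fun k => (hν0 k).le)
      (fun i => zero_le_one.trans (hN i)) (c := limsup f atTop + ε / 2) (by linarith)
      (by linarith) ?_
    filter_upwards [eventually_lt_of_limsup_lt (lt_add_of_pos_right _ (half_pos hε)) hbdd]
      with k hk
    rw [← log_le_iff_le_exp (zero_lt_one.trans_le (one_le_sum_range_succ hN k))]
    exact ((div_lt_iff₀ (hν0 k)).1 hk).le

end DirichletSeries

lemma summable_exp_neg_mul_iff {A : Type*} (w : A → ℝ) (hfin : ∀ t, {a | w a ≤ t}.Finite)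
    {ν : ℕ → ℝ} (hν : Function.Injective ν) (hrange : Set.range ν = Set.range w) (s : ℝ) :
    Summable (fun a => exp (-w a * s))
      ↔ Summable fun i => (Nat.card {a // w a = ν i} : ℝ) * exp (-ν i * s) := by
  have hpart : ∀ a, ∃! i, a ∈ {a | w a = ν i} := fun a => by
    obtain ⟨i, hi⟩ : w a ∈ Set.range ν := hrange ▸ Set.mem_range_self a
    exact ⟨i, hi.symm, fun j hj => hν (hj.symm.trans hi.symm)⟩
  have hfibre : ∀ i, ({a | w a = ν i} : Set A).Finite := fun i =>
    (hfin (ν i)).subset fun a (ha : w a = ν i) => ha.le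
  rw [summable_partition (fun a => (exp_pos _).le) hpart]
  have hsum : ∀ i, ∑' a : {a | w a = ν i}, exp (-w a * s)
      = (Nat.card {a // w a = ν i} : ℝ) * exp (-ν i * s) := fun i => by
    rw [tsum_congr fun a : {a | w a = ν i} => by rw [a.2.out], tsum_const, nsmul_eq_mul]; rfl
  simp only [hsum]
  refine and_iff_right fun i => ?_
  have := (hfibre i).to_subtype
  exact .of_finite

theorem combinatorial_capacity_eq_abscissa_general
    {A : Type*}
    (w : A → ℝ) (hw : ∀ a, 0 < w a)
    (hfin : ∀ t : ℝ, {a : A | w a ≤ t}.Finite)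
    (ν : ℕ → ℝ) (hν : StrictMono ν)
    (hrange : Set.range ν = Set.range w)
    (N : ℕ → ℕ) (hN : ∀ i, N i = Nat.card {a : A // w a = ν i})
    (hne : {s : ℝ | Summable fun a : A => Real.exp (-w a * s)}.Nonempty)
    (Q : ℝ) (hQ : Q = sInf {s : ℝ | Summable fun a : A => Real.exp (-w a * s)}) :
    limsup (fun k : ℕ => Real.log (∑ i ∈ Finset.range (k + 1), (N i : ℝ)) / ν k) atTop
      = Q := by
  have hsummable (s : ℝ) : Summable (fun a => exp (-w a * s))
      ↔ Summable fun i => (N i : ℝ) * exp (-ν i * s) := by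
    simp only [hN]; exact summable_exp_neg_mul_iff w hfin hν.injective hrange s
  have hν0 (k : ℕ) : 0 < ν k := by
    obtain ⟨a, ha⟩ : ν k ∈ Set.range w := hrange ▸ Set.mem_range_self k
    exact ha ▸ hw a
  have hN1 (i : ℕ) : 1 ≤ (N i : ℝ) := by
    obtain ⟨a, ha⟩ : ν i ∈ Set.range w := hrange ▸ Set.mem_range_self i
    have : Finite {a // w a = ν i} :=
      ((hfin (ν i)).subset fun a (h : w a = ν i) => h.le).to_subtype
    have : Nonempty {a // w a = ν i} := ⟨⟨a, ha⟩⟩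
    rw [hN]; exact_mod_cast Nat.card_pos
  simp only [hsummable] at hne hQ
  rw [hQ]
  exact limsup_log_sum_range_div_eq_sInf hν.monotone hν0 hN1 hne

/-- **Theorem 1(1) of Böcherer et al.**: the combinatorial capacity
`C = limsup_k ln(∑_{i≤k} N(νᵢ))/ν_k` of a constrained system equals the abscissa of
convergence `Q` of its generating function `G_A(s) = ∑_{a∈A} exp(-w(a)·s)`. -/
theorem combinatorial_capacity_eq_abscissa
    {A : Type*} [Countable A] [Infinite A]
    (w : A → ℝ) (hw : ∀ a, 0 < w a)
    (hfin : ∀ t : ℝ, {a : A | w a ≤ t}.Finite)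
    (ν : ℕ → ℝ) (hν : StrictMono ν)
    (hrange : Set.range ν = Set.range w)
    (N : ℕ → ℕ) (hN : ∀ i, N i = Nat.card {a : A // w a = ν i})
    (hne : {s : ℝ | Summable fun a : A => Real.exp (-w a * s)}.Nonempty)
    (hbdd : BddBelow {s : ℝ | Summable fun a : A => Real.exp (-w a * s)})
    (Q : ℝ) (hQ : Q = sInf {s : ℝ | Summable fun a : A => Real.exp (-w a * s)}) :
    limsup (fun k : ℕ => Real.log (∑ i ∈ Finset.range (k + 1), (N i : ℝ)) / ν k) atTop
      = Q :=
  combinatorial_capacity_eq_abscissa_general w hw hfin ν hν hrange N hN hne Q hQ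
end

section
/- Let A be a countably infinite type and w : A → ℝ a weight function with w(a) > 0 for all a, such that for every t ∈ ℝ the set {a : A | w(a) ≤ t} is finite. Let ν : ℕ → ℝ be the strictly increasing enumeration of the distinct weights and N(νᵢ) the number of a ∈ A with w(a) = νᵢ. Suppose the set {s ∈ ℝ | the family (exp(−w(a)·s))_{a∈A} is summable} is nonempty and bounded below with infimum Q. If the set of distinct weights is not too dense, i.e., there exist constants L ≥ 0 and K ≥ 0 such that for every natural number n the number of indices i with νᵢ < n is at most L·n^K, then Shannon's combinatorial capacity C₀ := limsup_{i→∞} ln(N(νᵢ))/νᵢ equals Q. -/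
open Filter

/-- Summability of `exp (-(c * n ^ p))` for `c, p > 0`. -/
private lemma summable_exp_neg_rpow_aux {c p : ℝ} (hc : 0 < c) (hp : 0 < p) :
    Summable fun n : ℕ => Real.exp (-(c * (n : ℝ) ^ p)) := by
  have h1 := tendsto_rpow_mul_exp_neg_mul_atTop_nhds_zero (2 / p) c hc
  have h2 : Tendsto (fun x : ℝ => x ^ p) atTop atTop := tendsto_rpow_atTop hp
  have h3 : Tendsto (fun x : ℝ => (x ^ p) ^ (2 / p) * Real.exp (-c * x ^ p)) atTop (nhds 0) :=
    h1.comp h2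
  have hcongr : ∀ᶠ x : ℝ in atTop, (x ^ p) ^ (2 / p) * Real.exp (-c * x ^ p)
      = x ^ (2 : ℝ) * Real.exp (-c * x ^ p) := by
    filter_upwards [eventually_ge_atTop (0 : ℝ)] with x hx
    rw [← Real.rpow_mul hx]
    congr 2
    field_simp
  have h5 : Tendsto (fun x : ℝ => x ^ (2 : ℝ) * Real.exp (-c * x ^ p)) atTop (nhds 0) :=
    (tendsto_congr' hcongr).mp h3
  have h4 : ∀ᶠ x : ℝ in atTop, x ^ (2 : ℝ) * Real.exp (-c * x ^ p) ≤ 1 :=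
    h5.eventually (eventually_le_nhds (by norm_num : (0 : ℝ) < 1))
  have h6 : ∀ᶠ n : ℕ in atTop,
      Real.exp (-(c * (n : ℝ) ^ p)) ≤ 1 / (n : ℝ) ^ (2 : ℝ) := by
    filter_upwards [tendsto_natCast_atTop_atTop.eventually h4, eventually_ge_atTop 1] with n hn hn1
    have hnpos : (0 : ℝ) < (n : ℝ) := by exact_mod_cast hn1
    have hpow : (0 : ℝ) < (n : ℝ) ^ (2 : ℝ) := Real.rpow_pos_of_pos hnpos 2
    rw [le_div_iff₀ hpow]
    calc Real.exp (-(c * (n : ℝ) ^ p)) * (n : ℝ) ^ (2 : ℝ)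
        = (n : ℝ) ^ (2 : ℝ) * Real.exp (-c * (n : ℝ) ^ p) := by rw [neg_mul]; ring
      _ ≤ 1 := hn
  obtain ⟨M, hM⟩ := eventually_atTop.mp h6
  rw [← summable_nat_add_iff M]
  have hbase : Summable fun n : ℕ => 1 / (n : ℝ) ^ (2 : ℝ) :=
    Real.summable_one_div_nat_rpow.mpr (by norm_num)
  refine Summable.of_nonneg_of_le (fun n => (Real.exp_pos _).le)
    (fun n => hM (n + M) (Nat.le_add_left _ _)) ((summable_nat_add_iff M).2 hbase)

/-- If the distinct weights are "not too dense", then `∑ exp (-δ νᵢ)` converges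
for every `δ > 0`. -/
private lemma summable_exp_neg_weights {ν : ℕ → ℝ} (hν : StrictMono ν)
    (hpos : ∀ i, 0 < ν i)
    (hfinn : ∀ n : ℕ, {j : ℕ | ν j < (n : ℝ)}.Finite)
    {L K : ℝ} (hL : 0 ≤ L) (hK : 0 ≤ K)
    (hcard : ∀ n : ℕ, (Nat.card {i : ℕ // ν i < (n : ℝ)} : ℝ) ≤ L * (n : ℝ) ^ K)
    {δ : ℝ} (hδ : 0 < δ) :
    Summable fun i : ℕ => Real.exp (-(δ * ν i)) := by
  set L' := max L 1 with hL'def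
  set K' := max K 1 with hK'def
  have hL1 : (1 : ℝ) ≤ L' := le_max_right _ _
  have hK1 : (1 : ℝ) ≤ K' := le_max_right _ _
  have hL'0 : (0 : ℝ) < L' := lt_of_lt_of_le one_pos hL1
  have hK'0 : (0 : ℝ) < K' := lt_of_lt_of_le one_pos hK1
  have key : ∀ i : ℕ, ((i : ℝ) + 1) ≤ L' * (ν i + 2) ^ K' := by
    intro i
    set n : ℕ := ⌊ν i⌋₊ + 1 with hn
    have hνn : ν i < (n : ℝ) := by
      rw [hn]; push_cast; exact Nat.lt_floor_add_one _
    have hn2 : (n : ℝ) ≤ ν i + 2 := by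
      rw [hn]; push_cast
      have := Nat.floor_le (hpos i).le
      linarith
    have hsub : Set.Iic i ⊆ {j : ℕ | ν j < (n : ℝ)} := fun j hj =>
      lt_of_le_of_lt (hν.monotone hj) hνn
    have hcount : ((i : ℝ) + 1) ≤ (Nat.card {j : ℕ // ν j < (n : ℝ)} : ℝ) := by
      have h1 : (Set.Iic i).ncard ≤ {j : ℕ | ν j < (n : ℝ)}.ncard :=
        Set.ncard_le_ncard hsub (hfinn n)
      have h2 : (Set.Iic i).ncard = i + 1 := by
        rw [← Finset.coe_Iic, Set.ncard_coe_finset, Nat.card_Iic]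
      have h3 : Nat.card {j : ℕ // ν j < (n : ℝ)} = {j : ℕ | ν j < (n : ℝ)}.ncard :=
        Nat.card_coe_set_eq _
      rw [h3]
      have : i + 1 ≤ {j : ℕ | ν j < (n : ℝ)}.ncard := h2 ▸ h1
      exact_mod_cast this
    have hn1 : (1 : ℝ) ≤ (n : ℝ) := by
      have : 1 ≤ n := by omega
      exact_mod_cast this
    have hb1 : (n : ℝ) ^ K ≤ (n : ℝ) ^ K' :=
      Real.rpow_le_rpow_of_exponent_le hn1 (le_max_left _ _)
    have hb2 : (n : ℝ) ^ K' ≤ (ν i + 2) ^ K' :=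
      Real.rpow_le_rpow (by positivity) hn2 hK'0.le
    calc ((i : ℝ) + 1) ≤ L * (n : ℝ) ^ K := hcount.trans (hcard n)
      _ ≤ L' * (n : ℝ) ^ K :=
          mul_le_mul_of_nonneg_right (le_max_left _ _) (Real.rpow_nonneg (by positivity) _)
      _ ≤ L' * (ν i + 2) ^ K' := mul_le_mul_of_nonneg_left (hb1.trans hb2) hL'0.le
  have hlow : ∀ i : ℕ, (((i : ℝ) + 1) / L') ^ (1 / K') - 2 ≤ ν i := by
    intro i
    have h0 : (0 : ℝ) < ((i : ℝ) + 1) / L' := div_pos (by positivity) hL'0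
    have h1 : ((i : ℝ) + 1) / L' ≤ (ν i + 2) ^ K' := by
      rw [div_le_iff₀ hL'0, mul_comm]
      exact key i
    have h2 : (((i : ℝ) + 1) / L') ^ (1 / K') ≤ ((ν i + 2) ^ K') ^ (1 / K') :=
      Real.rpow_le_rpow h0.le h1 (one_div_pos.mpr hK'0).le
    have h3 : ((ν i + 2) ^ K') ^ (1 / K') = ν i + 2 := by
      rw [← Real.rpow_mul (by linarith [hpos i] : (0 : ℝ) ≤ ν i + 2), mul_one_div,
        div_self (ne_of_gt hK'0), Real.rpow_one]
    rw [h3] at h2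
    linarith
  set p := 1 / K' with hpdef
  set c := δ / L' ^ p with hcdef
  have hp : 0 < p := one_div_pos.mpr hK'0
  have hc : 0 < c := div_pos hδ (Real.rpow_pos_of_pos hL'0 _)
  have hshift : Summable fun i : ℕ => Real.exp (-(c * ((i : ℝ) + 1) ^ p)) := by
    have h := summable_exp_neg_rpow_aux hc hp
    have h' := (summable_nat_add_iff 1).2 h
    refine h'.congr fun n => ?_
    congr 3
    push_cast
    ring
  refine Summable.of_nonneg_of_le (fun i => (Real.exp_pos _).le)
    (fun i => ?_) (hshift.mul_left (Real.exp (2 * δ)))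
  have hdiv : (((i : ℝ) + 1) / L') ^ p = ((i : ℝ) + 1) ^ p / L' ^ p :=
    Real.div_rpow (by positivity) hL'0.le p
  have h5 : c * ((i : ℝ) + 1) ^ p = δ * ((((i : ℝ) + 1) / L') ^ p) := by
    rw [hdiv, hcdef]
    field_simp
  rw [← Real.exp_add]
  apply Real.exp_le_exp.2
  have h6 := hlow i
  rw [h5]
  nlinarith [hδ]

/-- **Theorem 1(2) of Böcherer et al.**: if the set of distinct weights is "not too dense"
(there are `L ≥ 0`, `K ≥ 0` with `#{i : νᵢ < n} ≤ L·n^K` for all `n ∈ ℕ`), then Shannon's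
combinatorial capacity `C₀ = limsup_i ln(N(νᵢ))/νᵢ` equals the abscissa of convergence `Q`. -/
theorem shannon_capacity_eq_abscissa_of_not_too_dense
    {A : Type*} [Countable A] [Infinite A]
    (w : A → ℝ) (hw : ∀ a, 0 < w a)
    (hfin : ∀ t : ℝ, {a : A | w a ≤ t}.Finite)
    (ν : ℕ → ℝ) (hν : StrictMono ν)
    (hrange : Set.range ν = Set.range w)
    (N : ℕ → ℕ) (hN : ∀ i, N i = Nat.card {a : A // w a = ν i})
    (hne : {s : ℝ | Summable fun a : A => Real.exp (-w a * s)}.Nonempty)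
    (hbdd : BddBelow {s : ℝ | Summable fun a : A => Real.exp (-w a * s)})
    (Q : ℝ) (hQ : Q = sInf {s : ℝ | Summable fun a : A => Real.exp (-w a * s)})
    (hdense : ∃ L K : ℝ, 0 ≤ L ∧ 0 ≤ K ∧ ∀ n : ℕ,
      (Nat.card {i : ℕ // ν i < (n : ℝ)} : ℝ) ≤ L * (n : ℝ) ^ K) :
    limsup (fun i : ℕ => Real.log (N i : ℝ) / ν i) atTop = Q := by
  classical
  obtain ⟨L, K, hL, hK, hcard⟩ := hdense
  set S := {s : ℝ | Summable fun a : A => Real.exp (-w a * s)} with hSdef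
  -- basic facts about ν
  have hmemw : ∀ j : ℕ, ν j ∈ Set.range w := fun j => hrange ▸ Set.mem_range_self j
  have hνpos : ∀ i, 0 < ν i := by
    intro i
    obtain ⟨a, ha⟩ := hmemw i
    exact ha ▸ hw a
  have hνexists : ∀ a : A, ∃ i, ν i = w a := by
    intro a
    have : w a ∈ Set.range ν := by rw [hrange]; exact Set.mem_range_self a
    exact this
  choose idx hidx using hνexists
  have hfib : ∀ i, {a : A | w a = ν i}.Finite := fun i =>
    (hfin (ν i)).subset fun a ha => ha.le
  have hfibfin : ∀ i, Finite {a : A // w a = ν i} := fun i => (hfib i).to_subtype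
  have hfibne : ∀ i, Nonempty {a : A // w a = ν i} := by
    intro i
    obtain ⟨a, ha⟩ := hmemw i
    exact ⟨⟨a, ha⟩⟩
  have hN1 : ∀ i, 1 ≤ N i := by
    intro i
    rw [hN i]
    haveI := hfibfin i
    haveI := hfibne i
    exact Nat.card_pos
  have hidxiff : ∀ (i : ℕ) (a : A), idx a = i ↔ w a = ν i := by
    intro i a
    constructor
    · rintro rfl
      exact (hidx a).symm
    · intro h
      exact hν.injective ((hidx a).trans h)
  haveI hidxfin : ∀ i, Finite {a : A // idx a = i} := fun i =>
    Finite.of_equiv _ (Equiv.subtypeEquivRight (hidxiff i)).symm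
  have hcardidx : ∀ i, Nat.card {a : A // idx a = i} = N i := by
    intro i
    rw [hN i]
    exact Nat.card_congr (Equiv.subtypeEquivRight (hidxiff i))
  -- ν tends to infinity
  have hνtop : Tendsto ν atTop atTop := by
    apply tendsto_atTop_atTop_of_monotone' hν.monotone
    rintro ⟨b, hb⟩
    have hall : ∀ a : A, w a ≤ b := by
      intro a
      have h1 : w a ∈ Set.range ν := hrange.symm ▸ Set.mem_range_self a
      obtain ⟨j, hj⟩ := h1
      exact hj ▸ hb (Set.mem_range_self j)
    have huniv : (Set.univ : Set A).Finite :=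
      (hfin b).subset fun a _ => hall a
    exact Set.infinite_univ huniv
  -- the fibers of idx have tsum `N i * exp (-ν i * s)`
  have htsumfib : ∀ (s : ℝ) (i : ℕ),
      ∑' y : {a : A // idx a = i}, Real.exp (-w y.1 * s) = (N i : ℝ) * Real.exp (-ν i * s) := by
    intro s i
    have hconst : ∀ y : {a : A // idx a = i},
        Real.exp (-w y.1 * s) = Real.exp (-ν i * s) := by
      intro y
      rw [(hidxiff i y.1).mp y.2]
    rw [tsum_congr hconst, tsum_const, nsmul_eq_mul, hcardidx]
  -- grouping: summability over A vs summability of the grouped series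
  have hgroup : ∀ s : ℝ, Summable (fun a : A => Real.exp (-w a * s)) ↔
      Summable (fun i : ℕ => (N i : ℝ) * Real.exp (-ν i * s)) := by
    intro s
    have hequiv := ((Equiv.sigmaFiberEquiv idx).summable_iff
      (f := fun a : A => Real.exp (-w a * s))).symm
    have hcomp : (fun a : A => Real.exp (-w a * s)) ∘ (Equiv.sigmaFiberEquiv idx)
        = fun x : Σ i : ℕ, {a : A // idx a = i} => Real.exp (-w x.2.1 * s) := rfl
    rw [hcomp] at hequiv
    rw [hequiv, summable_sigma_of_nonneg (fun x => (Real.exp_pos _).le)]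
    constructor
    · rintro ⟨-, h⟩
      exact h.congr fun i => (htsumfib s i)
    · intro h
      refine ⟨fun i => Summable.of_finite, ?_⟩
      exact h.congr fun i => (htsumfib s i).symm
  -- each grouped term is at most the total sum
  have hfiberle : ∀ s : ℝ, Summable (fun a : A => Real.exp (-w a * s)) →
      ∀ i, (N i : ℝ) * Real.exp (-ν i * s) ≤ ∑' a : A, Real.exp (-w a * s) := by
    intro s hs i
    have h1 := Summable.tsum_subtype_le (fun a : A => Real.exp (-w a * s)) {a : A | w a = ν i}
      (fun a => (Real.exp_pos _).le) hs
    have h2 : ∑' b : {a : A | w a = ν i}, Real.exp (-w b.1 * s)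
        = (N i : ℝ) * Real.exp (-ν i * s) := by
      have hconst : ∀ b : {a : A | w a = ν i},
          Real.exp (-w b.1 * s) = Real.exp (-ν i * s) := by
        intro b
        have hb : w b.1 = ν i := b.2
        rw [hb]
      rw [tsum_congr hconst, tsum_const, nsmul_eq_mul, hN i]
      rfl
    calc (N i : ℝ) * Real.exp (-ν i * s)
        = ∑' b : {a : A | w a = ν i}, Real.exp (-w b.1 * s) := h2.symm
      _ ≤ ∑' a : A, Real.exp (-w a * s) := h1
  -- pointwise upper bound for the capacity sequence, for every s ∈ S
  have hle : ∀ s, Summable (fun a : A => Real.exp (-w a * s)) → ∀ i : ℕ,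
      Real.log (N i : ℝ) / ν i ≤ Real.log (∑' a : A, Real.exp (-w a * s)) / ν i + s := by
    intro s hs i
    set G := ∑' a : A, Real.exp (-w a * s) with hGdef
    have h1 : (N i : ℝ) * Real.exp (-ν i * s) ≤ G := hfiberle s hs i
    have hNpos : (0 : ℝ) < (N i : ℝ) := by
      have := hN1 i
      exact_mod_cast Nat.lt_of_lt_of_le Nat.zero_lt_one this
    have hpos : (0 : ℝ) < (N i : ℝ) * Real.exp (-ν i * s) := by positivity
    have h2 : Real.log ((N i : ℝ) * Real.exp (-ν i * s)) ≤ Real.log G :=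
      Real.log_le_log hpos h1
    rw [Real.log_mul (ne_of_gt hNpos) (Real.exp_ne_zero _), Real.log_exp] at h2
    have h3 : Real.log (N i : ℝ) ≤ Real.log G + ν i * s := by linarith
    calc Real.log (N i : ℝ) / ν i ≤ (Real.log G + ν i * s) / ν i :=
          (div_le_div_iff_of_pos_right (hνpos i)).2 h3
      _ = Real.log G / ν i + s := by
          rw [add_div]
          congr 1
          exact mul_div_cancel_left₀ s (ne_of_gt (hνpos i))
  -- nonnegativity of the capacity sequence
  have hfnonneg : ∀ i : ℕ, 0 ≤ Real.log (N i : ℝ) / ν i := by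
    intro i
    apply div_nonneg _ (hνpos i).le
    apply Real.log_nonneg
    exact_mod_cast hN1 i
  have hcob : IsCoboundedUnder (· ≤ ·) atTop (fun i : ℕ => Real.log (N i : ℝ) / ν i) :=
    isCoboundedUnder_le_of_le atTop hfnonneg
  -- Step 1 : limsup ≤ s for every s ∈ S
  have hstep1 : ∀ s ∈ S, limsup (fun i : ℕ => Real.log (N i : ℝ) / ν i) atTop ≤ s := by
    intro s hs
    set G := ∑' a : A, Real.exp (-w a * s) with hGdef
    have htend : Tendsto (fun i : ℕ => Real.log G / ν i + s) atTop (nhds (0 + s)) :=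
      (Tendsto.div_atTop tendsto_const_nhds hνtop).add tendsto_const_nhds
    have hlim2 : limsup (fun i : ℕ => Real.log G / ν i + s) atTop = 0 + s :=
      htend.limsup_eq
    have hbound : IsBoundedUnder (· ≤ ·) atTop (fun i : ℕ => Real.log G / ν i + s) :=
      htend.isBoundedUnder_le
    have hmain := limsup_le_limsup (Eventually.of_forall (hle s hs)) hcob hbound
    rw [hlim2] at hmain
    linarith
  -- the sequence is bounded above
  obtain ⟨s₀, hs₀⟩ := id hne
  have hfbdd : IsBoundedUnder (· ≤ ·) atTop (fun i : ℕ => Real.log (N i : ℝ) / ν i) := by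
    have htend : Tendsto (fun i : ℕ => Real.log (∑' a : A, Real.exp (-w a * s₀)) / ν i + s₀)
        atTop (nhds (0 + s₀)) :=
      (Tendsto.div_atTop tendsto_const_nhds hνtop).add tendsto_const_nhds
    exact htend.isBoundedUnder_le.mono_le (Eventually.of_forall (hle s₀ hs₀))
  -- ν-level sets are finite
  have hfinn : ∀ n : ℕ, {j : ℕ | ν j < (n : ℝ)}.Finite := by
    intro n
    have h1 : (Set.range w ∩ Set.Iio (n : ℝ)).Finite :=
      ((hfin n).image w).subset (by
        rintro x ⟨⟨a, rfl⟩, hx⟩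
        exact ⟨a, show w a ≤ (n : ℝ) from le_of_lt hx, rfl⟩)
    have h2 : {j : ℕ | ν j < (n : ℝ)} = ν ⁻¹' (Set.range w ∩ Set.Iio (n : ℝ)) := by
      ext j
      simp only [Set.mem_setOf_eq, Set.mem_preimage, Set.mem_inter_iff, Set.mem_Iio]
      exact ⟨fun h => ⟨hmemw j, h⟩, fun h => h.2⟩
    rw [h2]
    exact h1.preimage hν.injective.injOn
  set C := limsup (fun i : ℕ => Real.log (N i : ℝ) / ν i) atTop with hCdef
  -- Step 1 conclusion : C ≤ Q
  have hCQ : C ≤ Q := by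
    rw [hQ]
    exact le_csInf hne hstep1
  -- Step 2 : Q ≤ C
  have hQC : Q ≤ C := by
    apply le_of_forall_pos_le_add
    intro ε hε
    have hσ : C < C + ε / 2 := by linarith
    have hev : ∀ᶠ i in atTop, Real.log (N i : ℝ) / ν i < C + ε / 2 :=
      eventually_lt_of_limsup_lt hσ hfbdd
    have hsum : Summable (fun i : ℕ => (N i : ℝ) * Real.exp (-ν i * (C + ε))) := by
      have hsum0 : Summable (fun i : ℕ => Real.exp (-(ε / 2 * ν i))) :=
        summable_exp_neg_weights hν hνpos hfinn hL hK hcard (by linarith)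
      obtain ⟨M, hM⟩ := eventually_atTop.mp hev
      rw [← summable_nat_add_iff M]
      refine Summable.of_nonneg_of_le (fun n => by positivity) (fun n => ?_)
        ((summable_nat_add_iff M).2 hsum0)
      set i := n + M with hidef
      have h1 : Real.log (N i : ℝ) / ν i < C + ε / 2 := hM i (Nat.le_add_left _ _)
      have h2 : Real.log (N i : ℝ) < (C + ε / 2) * ν i := by
        rw [div_lt_iff₀ (hνpos i)] at h1
        linarith
      have hNpos : (0 : ℝ) < (N i : ℝ) := by
        have := hN1 i
        exact_mod_cast Nat.lt_of_lt_of_le Nat.zero_lt_one this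
      have h3 : (N i : ℝ) ≤ Real.exp ((C + ε / 2) * ν i) := by
        rw [← Real.exp_log hNpos]
        exact Real.exp_le_exp.2 h2.le
      calc (N i : ℝ) * Real.exp (-ν i * (C + ε))
          ≤ Real.exp ((C + ε / 2) * ν i) * Real.exp (-ν i * (C + ε)) :=
            mul_le_mul_of_nonneg_right h3 (Real.exp_pos _).le
        _ = Real.exp (-(ε / 2 * ν i)) := by
            rw [← Real.exp_add]
            congr 1
            ring
    have hmem : C + ε ∈ S := (hgroup (C + ε)).2 hsum
    rw [hQ]
    exact csInf_le hbdd hmem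
  exact le_antisymm hCQ hQC
end

section
/- Let W be a nonempty countable subset of the positive reals and L a finite set of labels with |L| ≥ 2. Model a string of the general run-length set ⟨W,L⟩ as a nonempty finite sequence of runs, i.e., pairs (ν, l) ∈ W × L, in which any two consecutive runs carry distinct labels; the weight of a string is the sum of its run-lengths. For s ∈ ℝ let G_W(s) = Σ_{ν∈W} exp(−ν·s) ∈ [0,∞]. Suppose s₀ > 0 satisfies (|L|−1)·G_W(s₀) = 1. Then the abscissa of convergence of the generating function of ⟨W,L⟩, i.e., the infimum of the set {s ∈ ℝ | the family (exp(−w(a)·s))_{a∈⟨W,L⟩} is summable}, equals s₀; consequently the combinatorial capacity of ⟨W,L⟩ is the unique positive real solution of (|L|−1)·G_W(s) = 1. -/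
open scoped ENNReal

/-- A string of the general run-length set `⟨W,L⟩`: a nonempty finite sequence of runs
`(ν, l) ∈ W × L` in which any two consecutive runs carry distinct labels. -/
def IsRLString {L : Type*} (W : Set ℝ) (a : List (ℝ × L)) : Prop :=
  a ≠ [] ∧ (∀ r ∈ a, r.1 ∈ W) ∧ a.Chain' fun p q => p.2 ≠ q.2

/-- The weight of a string: the sum of its run-lengths. -/
def rlWeight {L : Type*} (a : List (ℝ × L)) : ℝ :=
  (a.map Prod.fst).sum

/-- `G_W(s) = ∑_{ν ∈ W} exp(-ν·s)`, valued in `[0,∞]`. -/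
noncomputable def GW (W : Set ℝ) (s : ℝ) : ℝ≥0∞ :=
  ∑' ν : W, ENNReal.ofReal (Real.exp (-(ν : ℝ) * s))

/-! Splitting off the first run identifies a string of length `n + 2` with a string of length
`n + 1`, a run length, and one of the `|L| - 1` labels other than its first label. Hence the strings
of length `n + 1` contribute `|L| G_W(s) ((|L| - 1) G_W(s))ⁿ` to the generating function, which
sums to `|L| G_W(s) / (1 - (|L| - 1) G_W(s))` in `[0, ∞]`. As `G_W` is antitone, and strictly
decreasing where finite, this is finite exactly for `s > s₀`. -/

theorem summable_iff_tsum_ofReal_ne_top {α : Type*} {f : α → ℝ} (hf : ∀ i, 0 ≤ f i) :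
    Summable f ↔ ∑' i, ENNReal.ofReal (f i) ≠ ∞ := by
  refine ⟨Summable.tsum_ofReal_ne_top, fun h => ?_⟩
  have : Summable fun i => (f i).toNNReal := ENNReal.tsum_coe_ne_top_iff_summable.1 h
  exact (NNReal.summable_coe.2 this).congr fun i => Real.coe_toNNReal _ (hf i)

section GW

variable {W : Set ℝ}

theorem GW_antitone (hW : ∀ ν ∈ W, 0 ≤ ν) : Antitone (GW W) := fun s t hst =>
  ENNReal.tsum_le_tsum fun ν => ENNReal.ofReal_le_ofReal <| Real.exp_le_exp.2 <| by
    nlinarith [hW ν ν.2]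

theorem GW_lt_GW_of_lt (hW : ∀ ν ∈ W, 0 < ν) (hne : W.Nonempty) {s t : ℝ} (hst : s < t)
    (hs : GW W s ≠ ∞) : GW W t < GW W s := by
  obtain ⟨ν, hν⟩ := hne
  refine ENNReal.tsum_lt_tsum (i := ⟨ν, hν⟩)
    (ne_top_of_le_ne_top hs (GW_antitone (fun ν hν => (hW ν hν).le) hst.le))
    (fun μ => ENNReal.ofReal_le_ofReal <| Real.exp_le_exp.2 <| by nlinarith [hW μ μ.2]) ?_
  rw [ENNReal.ofReal_lt_ofReal_iff (Real.exp_pos _), Real.exp_lt_exp]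
  nlinarith [hW ν hν]

end GW

section RLString

variable {L : Type*} {W : Set ℝ}

set_option linter.deprecated false in
theorem isRLString_cons_iff {ν : ℝ} {l : L} {b : List (ℝ × L)} :
    IsRLString W ((ν, l) :: b) ↔
      ν ∈ W ∧ (b = [] ∨ ∃ hb : IsRLString W b, l ≠ (b.head hb.1).2) := by
  cases b with
  | nil => simp [IsRLString, List.Chain']
  | cons r b =>
    simp only [IsRLString, ne_eq, reduceCtorEq, not_false_eq_true, List.mem_cons,
      forall_eq_or_imp, Prod.forall, List.Chain', List.isChain_cons, List.head?_cons,
      Option.mem_def, Option.some.injEq, forall_eq', true_and, List.head_cons, exists_prop,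
      false_or]
    tauto

abbrev RLString (W : Set ℝ) (L : Type*) := {a : List (ℝ × L) // IsRLString W a}

def RLString.headLabel (a : RLString W L) : L := (a.1.head a.2.1).2

abbrev RLLayer (W : Set ℝ) (L : Type*) (n : ℕ) := {a : RLString W L // a.1.length = n}

def singletonRun (p : W × L) : RLLayer W L 1 :=
  ⟨⟨[(p.1, p.2)], isRLString_cons_iff.2 ⟨p.1.2, .inl rfl⟩⟩, rfl⟩

theorem singletonRun_bijective : Function.Bijective (singletonRun (W := W) (L := L)) := by
  refine ⟨fun p q h => ?_, ?_⟩
  · simp only [singletonRun, Subtype.mk.injEq, List.cons.injEq, Prod.mk.injEq] at h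
    exact Prod.ext (Subtype.ext h.1.1) h.1.2
  · rintro ⟨⟨_ | ⟨⟨ν, l⟩, _ | ⟨r, b⟩⟩, ha⟩, hlen⟩
    · simp at hlen
    · exact ⟨(⟨ν, (isRLString_cons_iff.1 ha).1⟩, l), rfl⟩
    · simp at hlen

def consRun (n : ℕ) (x : Σ b : RLLayer W L (n + 1), W × {l : L // l ≠ b.1.headLabel}) :
    RLLayer W L (n + 2) :=
  ⟨⟨(x.2.1, x.2.2) :: x.1.1.1,
      isRLString_cons_iff.2 ⟨x.2.1.2, .inr ⟨x.1.1.2, x.2.2.2⟩⟩⟩, by simp [x.1.2]⟩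

theorem consRun_bijective (n : ℕ) : Function.Bijective (consRun (W := W) (L := L) n) := by
  refine ⟨?_, ?_⟩
  · rintro ⟨b, p⟩ ⟨b', p'⟩ h
    simp only [consRun, Subtype.mk.injEq, List.cons.injEq, Prod.mk.injEq] at h
    obtain ⟨⟨hν, hl⟩, hb⟩ := h
    obtain rfl : b = b' := Subtype.ext (Subtype.ext hb)
    obtain rfl : p = p' := Prod.ext (Subtype.ext hν) (Subtype.ext hl)
    rfl
  · rintro ⟨⟨_ | ⟨⟨ν, l⟩, b⟩, ha⟩, hlen⟩
    · simp at hlen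
    obtain ⟨hν, rfl | ⟨hb, hl⟩⟩ := isRLString_cons_iff.1 ha
    · simp at hlen
    · exact ⟨⟨⟨⟨b, hb⟩, by simpa using hlen⟩, ⟨ν, hν⟩, ⟨l, hl⟩⟩, rfl⟩

noncomputable def rlTerm (s : ℝ) (a : List (ℝ × L)) : ℝ≥0∞ :=
  ENNReal.ofReal (Real.exp (-rlWeight a * s))

theorem rlTerm_cons (s ν : ℝ) (l : L) (b : List (ℝ × L)) :
    rlTerm s ((ν, l) :: b) = ENNReal.ofReal (Real.exp (-ν * s)) * rlTerm s b := by
  rw [rlTerm, rlTerm, ← ENNReal.ofReal_mul (Real.exp_nonneg _), ← Real.exp_add]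
  simp only [rlWeight, List.map_cons, List.sum_cons]
  ring_nf

noncomputable def layerSum (W : Set ℝ) (L : Type*) (s : ℝ) (n : ℕ) : ℝ≥0∞ :=
  ∑' a : RLLayer W L n, rlTerm s a.1.1

theorem layerSum_zero (s : ℝ) : layerSum W L s 0 = 0 := by
  have : IsEmpty (RLLayer W L 0) := ⟨fun a => a.1.2.1 (List.length_eq_zero_iff.1 a.2)⟩
  rw [layerSum, tsum_empty]

variable [Fintype L]

theorem layerSum_one (s : ℝ) : layerSum W L s 1 = Fintype.card L * GW W s := by
  rw [layerSum, ← (Equiv.ofBijective _ singletonRun_bijective).tsum_eq, ENNReal.tsum_prod',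
    GW, ← ENNReal.tsum_mul_left]
  refine tsum_congr fun ν => ?_
  simp [singletonRun, rlTerm, rlWeight]

theorem tsum_subtype_ne_const (l₀ : L) (c : ℝ≥0∞) :
    ∑' _ : {l : L // l ≠ l₀}, c = (Fintype.card L - 1) * c := by
  classical
  rw [tsum_fintype, Finset.sum_const, Finset.card_univ, nsmul_eq_mul, Fintype.card_subtype_compl,
    Fintype.card_subtype_eq, ENNReal.natCast_sub, Nat.cast_one]

theorem layerSum_add_two (s : ℝ) (n : ℕ) :
    layerSum W L s (n + 2) = (Fintype.card L - 1) * GW W s * layerSum W L s (n + 1) := by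
  rw [layerSum, ← (Equiv.ofBijective _ (consRun_bijective n)).tsum_eq, ENNReal.tsum_sigma',
    layerSum, ← ENNReal.tsum_mul_left]
  refine tsum_congr fun b => ?_
  simp only [Equiv.ofBijective_apply, consRun, rlTerm_cons, ENNReal.tsum_prod',
    tsum_subtype_ne_const, ENNReal.tsum_mul_left, ENNReal.tsum_mul_right, GW]

theorem layerSum_succ (s : ℝ) (n : ℕ) :
    layerSum W L s (n + 1) = Fintype.card L * GW W s * ((Fintype.card L - 1) * GW W s) ^ n := by
  induction n with
  | zero => simpa using layerSum_one s
  | succ n ih => rw [layerSum_add_two, ih, pow_succ]; ring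

-- In `ℝ≥0∞` this holds for every `s`: `1 - x = 0` for `x ≥ 1`, and `0⁻¹ = ∞`.
theorem tsum_rlTerm_eq (s : ℝ) :
    ∑' a : RLString W L, rlTerm s a.1
      = Fintype.card L * GW W s * (1 - (Fintype.card L - 1) * GW W s)⁻¹ := by
  rw [← (Equiv.sigmaFiberEquiv fun a : RLString W L => a.1.length).tsum_eq, ENNReal.tsum_sigma']
  change ∑' n, layerSum W L s n = _
  rw [tsum_eq_zero_add' ENNReal.summable, layerSum_zero, zero_add]
  simp only [layerSum_succ, ENNReal.tsum_mul_left, ENNReal.tsum_geometric]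

theorem tsum_rlTerm_ne_top_iff (hWne : W.Nonempty) (hWpos : ∀ ν ∈ W, 0 < ν) {s₀ : ℝ}
    (h : ((Fintype.card L : ℝ≥0∞) - 1) * GW W s₀ = 1) (s : ℝ) :
    ∑' a : RLString W L, rlTerm s a.1 ≠ ∞ ↔ s₀ < s := by
  rw [tsum_rlTerm_eq]
  set C : ℝ≥0∞ := Fintype.card L - 1
  have hC : C ≠ 0 := left_ne_zero_of_mul_eq_one h
  have hG₀ : GW W s₀ ≠ ∞ := fun hG => by simp [hG, ENNReal.mul_top hC] at h
  constructor
  · intro hfin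
    by_contra! hs
    have hG : GW W s₀ ≤ GW W s := GW_antitone (fun ν hν => (hWpos ν hν).le) hs
    have hCG : 1 ≤ C * GW W s := h ▸ by gcongr
    refine hfin ?_
    rw [tsub_eq_zero_of_le hCG, ENNReal.inv_zero, ENNReal.mul_top]
    refine mul_ne_zero (fun hL => hC (by simp [C, hL])) ?_
    exact ((right_ne_zero_of_mul_eq_one h).bot_lt.trans_le hG).ne'
  · intro hs
    have hG : GW W s < GW W s₀ := GW_lt_GW_of_lt hWpos hWne hs hG₀
    have hCG : C * GW W s < 1 := h ▸ ENNReal.mul_lt_mul_right hC (by simp [C]) hG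
    exact ENNReal.mul_ne_top (ENNReal.mul_ne_top (ENNReal.natCast_ne_top _) hG.ne_top)
      (ENNReal.inv_ne_top.2 (tsub_pos_of_lt hCG).ne')

end RLString

theorem abscissa_of_run_length_set_general
    {L : Type*} [Fintype L]
    (W : Set ℝ) (hWne : W.Nonempty) (hWpos : ∀ ν ∈ W, 0 < ν)
    (s₀ : ℝ)
    (h : ((Fintype.card L : ℝ≥0∞) - 1) * GW W s₀ = 1) :
    sInf {s : ℝ | Summable fun a : {a : List (ℝ × L) // IsRLString W a} =>
      Real.exp (-rlWeight (a : List (ℝ × L)) * s)} = s₀ := by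
  suffices hset : {s : ℝ | Summable fun a : {a : List (ℝ × L) // IsRLString W a} =>
      Real.exp (-rlWeight (a : List (ℝ × L)) * s)} = Set.Ioi s₀ by
    rw [hset, csInf_Ioi]
  ext s
  rw [Set.mem_ofPred_eq, summable_iff_tsum_ofReal_ne_top fun _ => (Real.exp_pos _).le]
  exact tsum_rlTerm_ne_top_iff hWne hWpos h s

/-- **Proposition 1 of the paper** (capacity of `⟨W,L⟩`): if `s₀ > 0` solves
`(|L|-1)·G_W(s₀) = 1`, then the abscissa of convergence of the generating function of
`⟨W,L⟩` equals `s₀`; hence the combinatorial capacity of `⟨W,L⟩` is the unique positive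
real solution of `(|L|-1)·G_W(s) = 1`. -/
theorem abscissa_of_run_length_set
    {L : Type*} [Fintype L] (hL : 2 ≤ Fintype.card L)
    (W : Set ℝ) (hWne : W.Nonempty) (hWc : W.Countable) (hWpos : ∀ ν ∈ W, 0 < ν)
    (s₀ : ℝ) (hs₀ : 0 < s₀)
    (h : ((Fintype.card L : ℝ≥0∞) - 1) * GW W s₀ = 1) :
    sInf {s : ℝ | Summable fun a : {a : List (ℝ × L) // IsRLString W a} =>
      Real.exp (-rlWeight (a : List (ℝ × L)) * s)} = s₀ :=
  abscissa_of_run_length_set_general W hWne hWpos s₀ h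
end

section
/- Let W be a nonempty countable subset of the positive reals and L a finite set of labels with |L| ≥ 2. Model a string of the general run-length set ⟨W,L⟩ as a nonempty finite sequence of runs, i.e., pairs (ν, l) ∈ W × L, in which any two consecutive runs carry distinct labels; the weight of a string is the sum of its run-lengths. For every real s with (|L|−1)·G_W(s) < 1 (where G_W(s) = Σ_{ν∈W} exp(−ν·s)), the generating function of ⟨W,L⟩ satisfies Σ_{a∈⟨W,L⟩} exp(−w(a)·s) = |L|·G_W(s) / (1 − (|L|−1)·G_W(s)) = |L|·G_W(s)·Σ_{m=0}^{∞} ((|L|−1)·G_W(s))^m. -/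
open scoped ENNReal

namespace RLGF

variable {L : Type*}

noncomputable def f (s : ℝ) (a : List (ℝ × L)) : ℝ≥0∞ :=
  ENNReal.ofReal (Real.exp (-rlWeight a * s))

lemma rlWeight_cons (p : ℝ × L) (a : List (ℝ × L)) :
    rlWeight (p :: a) = p.1 + rlWeight a := by simp [rlWeight]

lemma f_cons (s : ℝ) (p : ℝ × L) (a : List (ℝ × L)) :
    f s (p :: a) = ENNReal.ofReal (Real.exp (-p.1 * s)) * f s a := by
  rw [f, f, rlWeight_cons, ← ENNReal.ofReal_mul (Real.exp_nonneg _), ← Real.exp_add]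
  congr 2
  ring

/-- Strings of the run-length set with `n` runs, whose first run carries label `l`. -/
def CStr (W : Set ℝ) (n : ℕ) (l : L) :=
  {a : List (ℝ × L) // IsRLString W a ∧ a.length = n ∧ (a.map Prod.snd).head? = some l}

lemma tsum_CStr_one (W : Set ℝ) (s : ℝ) (l : L) :
    ∑' a : CStr W 1 l, f s a.1 = GW W s := by
  have hbij : Function.Bijective
      (fun ν : W => (⟨[((ν : ℝ), l)],
        ⟨⟨by simp, by simpa using ν.2, List.isChain_singleton _⟩, by simp, by simp⟩⟩ :
        CStr W 1 l)) := by
    constructor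
    · intro x y h
      simpa [Subtype.ext_iff] using h
    · rintro ⟨a, ⟨hne, hmem, hch⟩, hlen, hhd⟩
      obtain ⟨p, rfl⟩ := List.length_eq_one_iff.mp hlen
      have hpl : p.2 = l := by simpa using hhd
      exact ⟨⟨p.1, hmem p (by simp)⟩, by
        apply Subtype.ext
        simp [← hpl]⟩
  calc ∑' a : CStr W 1 l, f s a.1
      = ∑' ν : W, f s [((ν : ℝ), l)] :=
        (Equiv.tsum_eq (Equiv.ofBijective _ hbij) (fun a : CStr W 1 l => f s a.1)).symm
    _ = GW W s := by
        unfold GW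
        exact tsum_congr fun ν => by simp [f, rlWeight]

lemma tsum_CStr [Fintype L] (hL : 2 ≤ Fintype.card L) (W : Set ℝ) (s : ℝ) :
    ∀ (n : ℕ) (l : L), ∑' a : CStr W (n + 1) l, f s a.1
      = GW W s * (((Fintype.card L : ℝ≥0∞) - 1) * GW W s) ^ n := by
  intro n
  induction n with
  | zero => intro l; simpa using tsum_CStr_one W s l
  | succ n ih =>
    intro l
    classical
    -- the map prepending a run `(ν, l)` to a string starting with label `l' ≠ l`
    let e : W × (Σ l' : {l' : L // l' ≠ l}, CStr W (n + 1) l'.1) → CStr W (n + 2) l :=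
      fun x => ⟨((x.1 : ℝ), l) :: x.2.2.1, by
        obtain ⟨ν, l', rest⟩ := x
        obtain ⟨a, ⟨hne, hmem, hch⟩, hlen, hhd⟩ := rest
        refine ⟨⟨by simp, ?_, ?_⟩, by simp [hlen], by simp⟩
        · rintro r hr
          rcases List.mem_cons.mp hr with h | h
          · rw [h]; exact ν.2
          · exact hmem r h
        · refine List.isChain_cons.mpr ⟨?_, hch⟩
          intro y hy
          have : (a.map Prod.snd).head? = some y.2 := by
            rw [List.head?_map, hy]; rfl
          rw [this] at hhd
          have : y.2 = l'.1 := by injection hhd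
          simp only [ne_eq]
          rw [this]
          exact fun h => l'.2 h.symm⟩
    have hbij : Function.Bijective e := by
      constructor
      · intro x y h
        obtain ⟨ν1, l1, r1⟩ := x
        obtain ⟨ν2, l2, r2⟩ := y
        have hval : ((ν1 : ℝ), l) :: r1.1 = ((ν2 : ℝ), l) :: r2.1 :=
          congrArg Subtype.val h
        simp only [List.cons.injEq, Prod.mk.injEq] at hval
        obtain ⟨⟨hν, -⟩, hr⟩ := hval
        have h1 := r1.2.2.2
        have h2 := r2.2.2.2
        rw [hr] at h1
        rw [h2] at h1
        have hl0 : l2.1 = l1.1 := by injection h1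
        have hl : l1 = l2 := Subtype.ext hl0.symm
        have hν' : ν1 = ν2 := Subtype.ext hν
        have h2' : (⟨l1, r1⟩ : Σ l' : {l' : L // l' ≠ l}, CStr W (n + 1) l'.1) = ⟨l2, r2⟩ := by
          subst hl
          exact congrArg _ (Subtype.ext hr)
        rw [Prod.ext_iff]
        exact ⟨hν', h2'⟩
      · rintro ⟨a, ⟨hne, hmem, hch⟩, hlen, hhd⟩
        match a, hlen, hmem, hch, hhd, hne with
        | p :: q :: t, hlen, hmem, hch, hhd, hne =>
          have hpl : p.2 = l := by simpa using hhd
          have hpq : p.2 ≠ q.2 := (List.isChain_cons_cons.mp hch).1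
          have hql : q.2 ≠ l := fun h => hpq (by rw [hpl, h])
          refine ⟨⟨⟨p.1, hmem p (by simp)⟩, ⟨q.2, hql⟩,
            ⟨q :: t, ⟨by simp, fun r hr => hmem r (List.mem_cons_of_mem _ hr),
              (List.isChain_cons_cons.mp hch).2⟩, by simpa using hlen, by simp⟩⟩, ?_⟩
          apply Subtype.ext
          simp [e, ← hpl]
    calc ∑' a : CStr W (n + 2) l, f s a.1
        = ∑' x : W × (Σ l' : {l' : L // l' ≠ l}, CStr W (n + 1) l'.1),
            f s (((x.1 : ℝ), l) :: x.2.2.1) :=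
          (Equiv.tsum_eq (Equiv.ofBijective e hbij) (fun a : CStr W (n + 2) l => f s a.1)).symm
      _ = ∑' x : W × (Σ l' : {l' : L // l' ≠ l}, CStr W (n + 1) l'.1),
            ENNReal.ofReal (Real.exp (-(x.1 : ℝ) * s)) * f s x.2.2.1 :=
          tsum_congr fun x => f_cons s _ _
      _ = ∑' (ν : W) (y : Σ l' : {l' : L // l' ≠ l}, CStr W (n + 1) l'.1),
            ENNReal.ofReal (Real.exp (-(ν : ℝ) * s)) * f s y.2.1 :=
          ENNReal.tsum_prod
            (f := fun (ν : W) (y : Σ l' : {l' : L // l' ≠ l}, CStr W (n + 1) l'.1) =>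
              ENNReal.ofReal (Real.exp (-(ν : ℝ) * s)) * f s y.2.1)
      _ = ∑' ν : W, ENNReal.ofReal (Real.exp (-(ν : ℝ) * s))
            * ∑' y : Σ l' : {l' : L // l' ≠ l}, CStr W (n + 1) l'.1, f s y.2.1 :=
          tsum_congr fun ν => ENNReal.tsum_mul_left
      _ = GW W s * ∑' y : Σ l' : {l' : L // l' ≠ l}, CStr W (n + 1) l'.1, f s y.2.1 := by
          rw [ENNReal.tsum_mul_right]
          rfl
      _ = GW W s * ∑' l' : {l' : L // l' ≠ l}, ∑' b : CStr W (n + 1) l'.1, f s b.1 := by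
          rw [ENNReal.tsum_sigma'
            (f := fun y : Σ l' : {l' : L // l' ≠ l}, CStr W (n + 1) l'.1 => f s y.2.1)]
      _ = GW W s * ∑' l' : {l' : L // l' ≠ l},
            GW W s * (((Fintype.card L : ℝ≥0∞) - 1) * GW W s) ^ n := by
          congr 1
          exact tsum_congr fun l' => ih l'.1
      _ = GW W s * (((Fintype.card L : ℝ≥0∞) - 1)
            * (GW W s * (((Fintype.card L : ℝ≥0∞) - 1) * GW W s) ^ n)) := by
          congr 1
          rw [tsum_fintype, Finset.sum_const, nsmul_eq_mul, Finset.card_univ]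
          congr 1
          have hcard : Fintype.card {l' : L // l' ≠ l} = Fintype.card L - 1 := by
            rw [Fintype.card_subtype_compl]
            simp
          rw [hcard, ENNReal.natCast_sub, Nat.cast_one]
      _ = GW W s * (((Fintype.card L : ℝ≥0∞) - 1) * GW W s) ^ (n + 1) := by
          ring

end RLGF

/-- **Generating function of `⟨W,L⟩`** (equation (13) of the paper): for every `s` with
`(|L|-1)·G_W(s) < 1`,
`∑_{a∈⟨W,L⟩} exp(-w(a)·s) = |L|·G_W(s)/(1-(|L|-1)·G_W(s))
                          = |L|·G_W(s)·∑_{m=0}^∞ ((|L|-1)·G_W(s))^m`. -/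
theorem run_length_generating_function
    {L : Type*} [Fintype L] (hL : 2 ≤ Fintype.card L)
    (W : Set ℝ) (hWne : W.Nonempty) (hWc : W.Countable) (hWpos : ∀ ν ∈ W, 0 < ν)
    (s : ℝ) (hs : ((Fintype.card L : ℝ≥0∞) - 1) * GW W s < 1) :
    (∑' a : {a : List (ℝ × L) // IsRLString W a},
        ENNReal.ofReal (Real.exp (-rlWeight (a : List (ℝ × L)) * s)) =
      (Fintype.card L : ℝ≥0∞) * GW W s /
        (1 - ((Fintype.card L : ℝ≥0∞) - 1) * GW W s)) ∧
    (∑' a : {a : List (ℝ × L) // IsRLString W a},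
        ENNReal.ofReal (Real.exp (-rlWeight (a : List (ℝ × L)) * s)) =
      (Fintype.card L : ℝ≥0∞) * GW W s *
        ∑' m : ℕ, (((Fintype.card L : ℝ≥0∞) - 1) * GW W s) ^ m) := by
  classical
  have key : ∑' a : {a : List (ℝ × L) // IsRLString W a}, RLGF.f s a.1
      = (Fintype.card L : ℝ≥0∞) * GW W s *
        ∑' m : ℕ, (((Fintype.card L : ℝ≥0∞) - 1) * GW W s) ^ m := by
    set Str := {a : List (ℝ × L) // IsRLString W a} with hStr
    have hfib : ∀ n : ℕ, ∑' x : {a : Str // a.1.length = n + 1}, RLGF.f s x.1.1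
        = (Fintype.card L : ℝ≥0∞)
            * (GW W s * (((Fintype.card L : ℝ≥0∞) - 1) * GW W s) ^ n) := by
      intro n
      let e : (Σ l : L, RLGF.CStr W (n + 1) l) → {a : Str // a.1.length = n + 1} :=
        fun x => ⟨⟨x.2.1, x.2.2.1⟩, x.2.2.2.1⟩
      have hbij : Function.Bijective e := by
        constructor
        · intro x y h
          obtain ⟨l1, r1⟩ := x
          obtain ⟨l2, r2⟩ := y
          have hval : r1.1 = r2.1 := congrArg (fun z => z.1.1) h
          have h1 := r1.2.2.2
          have h2 := r2.2.2.2
          rw [hval] at h1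
          rw [h2] at h1
          have hl : l2 = l1 := by injection h1
          subst hl
          exact congrArg _ (Subtype.ext hval)
        · rintro ⟨⟨a, hstr⟩, hlen⟩
          have hne : a ≠ [] := hstr.1
          refine ⟨⟨(a.head hne).2, ⟨a, hstr, hlen, ?_⟩⟩, rfl⟩
          rw [List.head?_map, List.head?_eq_head hne]
          rfl
      calc ∑' x : {a : Str // a.1.length = n + 1}, RLGF.f s x.1.1
          = ∑' y : Σ l : L, RLGF.CStr W (n + 1) l, RLGF.f s y.2.1 :=
            (Equiv.tsum_eq (Equiv.ofBijective e hbij)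
              (fun x : {a : Str // a.1.length = n + 1} => RLGF.f s x.1.1)).symm
        _ = ∑' l : L, ∑' b : RLGF.CStr W (n + 1) l, RLGF.f s b.1 :=
            ENNReal.tsum_sigma'
              (f := fun y : Σ l : L, RLGF.CStr W (n + 1) l => RLGF.f s y.2.1)
        _ = ∑' _l : L, GW W s * (((Fintype.card L : ℝ≥0∞) - 1) * GW W s) ^ n :=
            tsum_congr fun l => RLGF.tsum_CStr hL W s n l
        _ = (Fintype.card L : ℝ≥0∞)
              * (GW W s * (((Fintype.card L : ℝ≥0∞) - 1) * GW W s) ^ n) := by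
            rw [tsum_fintype, Finset.sum_const, nsmul_eq_mul, Finset.card_univ]
    have hz : ∑' x : {a : Str // a.1.length = 0}, RLGF.f s x.1.1 = 0 := by
      have : IsEmpty {a : Str // a.1.length = 0} :=
        ⟨fun x => x.1.2.1 (List.length_eq_zero_iff.mp x.2)⟩
      exact tsum_empty
    calc ∑' a : Str, RLGF.f s a.1
        = ∑' x : Σ n : ℕ, {a : Str // a.1.length = n}, RLGF.f s x.2.1.1 :=
          (Equiv.tsum_eq (Equiv.sigmaFiberEquiv (fun a : Str => a.1.length))
            (fun a : Str => RLGF.f s a.1)).symm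
      _ = ∑' n : ℕ, ∑' x : {a : Str // a.1.length = n}, RLGF.f s x.1.1 :=
          ENNReal.tsum_sigma'
            (f := fun x : Σ n : ℕ, {a : Str // a.1.length = n} => RLGF.f s x.2.1.1)
      _ = (∑' x : {a : Str // a.1.length = 0}, RLGF.f s x.1.1)
            + ∑' n : ℕ, ∑' x : {a : Str // a.1.length = n + 1}, RLGF.f s x.1.1 :=
          tsum_eq_zero_add' ENNReal.summable
      _ = ∑' n : ℕ, (Fintype.card L : ℝ≥0∞)
            * (GW W s * (((Fintype.card L : ℝ≥0∞) - 1) * GW W s) ^ n) := by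
          rw [hz, zero_add]
          exact tsum_congr hfib
      _ = (Fintype.card L : ℝ≥0∞) * GW W s *
            ∑' m : ℕ, (((Fintype.card L : ℝ≥0∞) - 1) * GW W s) ^ m := by
          rw [ENNReal.tsum_mul_left, ENNReal.tsum_mul_left, mul_assoc]
  have key' : ∑' a : {a : List (ℝ × L) // IsRLString W a},
      ENNReal.ofReal (Real.exp (-rlWeight (a : List (ℝ × L)) * s))
      = (Fintype.card L : ℝ≥0∞) * GW W s *
        ∑' m : ℕ, (((Fintype.card L : ℝ≥0∞) - 1) * GW W s) ^ m := key
  refine ⟨?_, key'⟩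
  rw [key', ENNReal.tsum_geometric, div_eq_mul_inv]
end

section
/- Let W be a nonempty countable subset of the positive reals and L a finite set of labels with |L| ≥ 2, and fix l₀ ∈ L. Let 𝒴 be the set of strings of ⟨W,L⟩ (nonempty finite sequences of runs (ν,l) ∈ W × L with consecutive labels distinct) that have at least two runs, whose first run carries label l₀, and all of whose subsequent runs carry labels different from l₀; the weight of a string is the sum of its run-lengths. For every real s with (|L|−2)·G_W(s) < 1 (where G_W(s) = Σ_{ν∈W} exp(−ν·s)), the generating function of 𝒴 satisfies Σ_{y∈𝒴} exp(−w(y)·s) = (|L|−1)·G_W(s)² / (1 − (|L|−2)·G_W(s)) = G_W(s)·(|L|−1)·G_W(s)·Σ_{k=0}^{∞} ((|L|−2)·G_W(s))^k. -/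
open scoped ENNReal

/-- Membership in the set `𝒴`: a string of `⟨W,L⟩` with at least two runs, whose first
run carries the label `l₀` and all of whose subsequent runs carry labels different
from `l₀`. -/
def MemY {L : Type*} (W : Set ℝ) (l₀ : L) (a : List (ℝ × L)) : Prop :=
  IsRLString W a ∧
    ∃ r rest, a = r :: rest ∧ r.2 = l₀ ∧ rest ≠ [] ∧ ∀ q ∈ rest, q.2 ≠ l₀

/-!
Removing the first run of a string factors its weight `exp(-w·s)`, so prepending a run with
length in `W` and label in a set of `m` admissible labels multiplies a generating function by
`m · G_W(s)`. After the initial `l₀`-run, the second run of a string of `𝒴` has `|L| - 1`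
admissible labels and every later run `|L| - 2` (neither `l₀` nor the previous label), so the
strings of `𝒴` with `n + 2` runs contribute `G_W(s) · (|L|-1) G_W(s) · ((|L|-2) G_W(s))^n`.
Summing over `n` gives the geometric series, which in `[0, ∞]` equals `(1 - x)⁻¹`.
-/

noncomputable def expWeight {L : Type*} (s : ℝ) (a : List (ℝ × L)) : ℝ≥0∞ :=
  ENNReal.ofReal (Real.exp (-rlWeight a * s))

/-- The tails, after the first run, of the strings of `𝒴`, graded by their number of runs. -/
def IsAvoidingString {L : Type*} (W : Set ℝ) (l₀ : L) (n : ℕ) (a : List (ℝ × L)) : Prop :=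
  a.length = n ∧ (∀ r ∈ a, r.1 ∈ W ∧ r.2 ≠ l₀) ∧ a.IsChain fun p q => p.2 ≠ q.2

def admissibleHeadLabels {L : Type*} (l₀ : L) (rest : List (ℝ × L)) : Set L :=
  {l | l ≠ l₀ ∧ ∀ q ∈ rest.head?, l ≠ q.2}

theorem ENNReal.tsum_subtype_exists {α ι : Type*} (P : ι → α → Prop)
    (hP : ∀ a i j, P i a → P j a → i = j) (f : α → ℝ≥0∞) :
    ∑' a : {a // ∃ i, P i a}, f a = ∑' i, ∑' a : {a // P i a}, f a := by
  let e : (Σ i, {a // P i a}) → {a // ∃ i, P i a} := fun x => ⟨x.2, x.1, x.2.2⟩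
  have he : e.Bijective := by
    refine ⟨?_, fun ⟨a, i, ha⟩ => ⟨⟨i, a, ha⟩, rfl⟩⟩
    rintro ⟨i, a, ha⟩ ⟨j, b, hb⟩ hab
    obtain rfl : a = b := congrArg Subtype.val hab
    obtain rfl := hP a i j ha hb
    rfl
  rw [← (Equiv.ofBijective e he).tsum_eq, ENNReal.tsum_sigma']
  rfl

section

variable {L : Type*}

lemma expWeight_cons (s : ℝ) (r : ℝ × L) (a : List (ℝ × L)) :
    expWeight s (r :: a) = ENNReal.ofReal (Real.exp (-r.1 * s)) * expWeight s a := by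
  rw [expWeight, expWeight, rlWeight, List.map_cons, List.sum_cons, neg_add, add_mul,
    Real.exp_add, ENNReal.ofReal_mul (Real.exp_nonneg _), ← rlWeight]

theorem tsum_expWeight_of_iff_cons (W : Set ℝ) (s : ℝ) (P T : List (ℝ × L) → Prop)
    (A : List (ℝ × L) → Set L) (m : ℕ)
    (hP : ∀ a, P a ↔ ∃ r rest, a = r :: rest ∧ T rest ∧ r.1 ∈ W ∧ r.2 ∈ A rest)
    (hA : ∀ b, T b → ENat.card (A b) = m) :
    ∑' a : {a // P a}, expWeight s a.1 = m * GW W s * ∑' b : {b // T b}, expWeight s b.1 := by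
  let e : (Σ b : {b // T b}, W × A b.1) → {a // P a} :=
    fun x => ⟨((x.2.1 : ℝ), (x.2.2 : L)) :: x.1, (hP _).2 ⟨_, _, rfl, x.1.2, x.2.1.2, x.2.2.2⟩⟩
  have he : e.Bijective := by
    refine ⟨?_, ?_⟩
    · rintro ⟨⟨b, _⟩, ⟨ν, _⟩, ⟨l, _⟩⟩ ⟨⟨b', _⟩, ⟨ν', _⟩, ⟨l', _⟩⟩ h
      simp only [e, Subtype.mk.injEq, List.cons.injEq, Prod.mk.injEq] at h
      obtain ⟨⟨rfl, rfl⟩, rfl⟩ := h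
      rfl
    · rintro ⟨a, ha⟩
      obtain ⟨r, rest, rfl, hT, hW, hA⟩ := (hP a).1 ha
      exact ⟨⟨⟨rest, hT⟩, ⟨r.1, hW⟩, ⟨r.2, hA⟩⟩, rfl⟩
  have hfiber : ∀ b : {b // T b}, ∑' p : W × A b.1, expWeight s (((p.1 : ℝ), (p.2 : L)) :: b.1)
      = m * GW W s * expWeight s b.1 := fun b => by
    simp only [expWeight_cons, ENNReal.tsum_prod', ENNReal.tsum_const, hA b b.2,
      ENNReal.tsum_mul_left, ENNReal.tsum_mul_right, GW]
    push_cast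
    ring
  rw [← (Equiv.ofBijective e he).tsum_eq, ENNReal.tsum_sigma', ← ENNReal.tsum_mul_left]
  exact tsum_congr hfiber

end

section

variable {L : Type*} (W : Set ℝ) (l₀ : L)

lemma isAvoidingString_succ_iff (n : ℕ) (a : List (ℝ × L)) :
    IsAvoidingString W l₀ (n + 1) a ↔ ∃ r rest, a = r :: rest ∧ IsAvoidingString W l₀ n rest ∧
      r.1 ∈ W ∧ r.2 ∈ admissibleHeadLabels l₀ rest := by
  constructor
  · rintro ⟨hlen, hmem, hchain⟩
    obtain ⟨r, rest, rfl⟩ := List.exists_cons_of_length_eq_add_one hlen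
    rw [List.isChain_cons] at hchain
    obtain ⟨hrW, hrl₀⟩ := hmem r List.mem_cons_self
    exact ⟨r, rest, rfl, ⟨by simpa using hlen, fun q hq => hmem q (List.mem_cons_of_mem _ hq),
      hchain.2⟩, hrW, hrl₀, hchain.1⟩
  · rintro ⟨r, rest, rfl, ⟨hlen, hmem, hchain⟩, hrW, hrl₀, hhead⟩
    refine ⟨by simp [hlen], ?_, List.isChain_cons.2 ⟨hhead, hchain⟩⟩
    rintro q (_ | ⟨_, hq⟩)
    exacts [⟨hrW, hrl₀⟩, hmem q hq]

lemma card_admissibleHeadLabels_nil [Fintype L] :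
    ENat.card (admissibleHeadLabels l₀ ([] : List (ℝ × L))) = (Fintype.card L - 1 : ℕ) := by
  classical
  have : admissibleHeadLabels l₀ ([] : List (ℝ × L)) = ↑(Finset.univ.erase l₀) := by
    ext l; simp [admissibleHeadLabels]
  rw [this, ENat.card_coe_set_eq, Set.encard_coe_eq_coe_finsetCard, Finset.card_erase_of_mem
    (Finset.mem_univ _), Finset.card_univ]

lemma card_admissibleHeadLabels_cons [Fintype L] (q : ℝ × L) (t : List (ℝ × L)) (hq : q.2 ≠ l₀) :
    ENat.card (admissibleHeadLabels l₀ (q :: t)) = (Fintype.card L - 2 : ℕ) := by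
  classical
  have : admissibleHeadLabels l₀ (q :: t) = ↑(Finset.univ \ {l₀, q.2}) := by
    ext l; simp [admissibleHeadLabels, not_or]
  rw [this, ENat.card_coe_set_eq, Set.encard_coe_eq_coe_finsetCard,
    Finset.card_sdiff_of_subset (Finset.subset_univ _), Finset.card_univ,
    Finset.card_pair hq.symm]

lemma tsum_expWeight_isAvoidingString_zero (s : ℝ) :
    ∑' a : {a // IsAvoidingString W l₀ 0 a}, expWeight s a.1 = 1 := by
  have hnil : IsAvoidingString W l₀ 0 ([] : List (ℝ × L)) := by simp [IsAvoidingString]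
  rw [tsum_eq_single ⟨[], hnil⟩ fun b hb =>
    absurd (Subtype.ext (List.eq_nil_of_length_eq_zero b.2.1)) hb]
  simp [expWeight, rlWeight]

lemma tsum_expWeight_isAvoidingString_succ [Fintype L] (s : ℝ) (n : ℕ) :
    ∑' a : {a // IsAvoidingString W l₀ (n + 1) a}, expWeight s a.1 =
      (Fintype.card L - 1 : ℕ) * GW W s * ((Fintype.card L - 2 : ℕ) * GW W s) ^ n := by
  induction n with
  | zero =>
    rw [tsum_expWeight_of_iff_cons W s _ _ _ (Fintype.card L - 1)
      (isAvoidingString_succ_iff W l₀ 0), tsum_expWeight_isAvoidingString_zero, pow_zero]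
    rintro b ⟨hlen, -⟩
    rw [List.eq_nil_of_length_eq_zero hlen, card_admissibleHeadLabels_nil]
  | succ n ih =>
    rw [tsum_expWeight_of_iff_cons W s _ _ _ (Fintype.card L - 2)
      (isAvoidingString_succ_iff W l₀ (n + 1)), ih]
    · ring
    · rintro (_ | ⟨q, t⟩) ⟨hlen, hmem, -⟩
      · simp at hlen
      · exact card_admissibleHeadLabels_cons l₀ q t (hmem q List.mem_cons_self).2

lemma memY_iff (a : List (ℝ × L)) :
    MemY W l₀ a ↔ ∃ r rest, a = r :: rest ∧ (∃ n, IsAvoidingString W l₀ (n + 1) rest) ∧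
      r.1 ∈ W ∧ r.2 ∈ ({l₀} : Set L) := by
  constructor
  · rintro ⟨⟨-, hW, hchain⟩, r, rest, rfl, hr, hrest, hl₀⟩
    obtain ⟨q, t, rfl⟩ := List.exists_cons_of_ne_nil hrest
    exact ⟨r, _, rfl, ⟨t.length, rfl, fun p hp => ⟨hW p (List.mem_cons_of_mem _ hp), hl₀ p hp⟩,
      (List.isChain_cons.1 hchain).2⟩, hW r List.mem_cons_self, hr⟩
  · rintro ⟨r, rest, rfl, ⟨n, hlen, hmem, hchain⟩, hrW, hr⟩
    obtain ⟨q, t, rfl⟩ := List.exists_cons_of_length_eq_add_one hlen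
    refine ⟨⟨List.cons_ne_nil _ _, ?_, List.isChain_cons.2 ⟨?_, hchain⟩⟩,
      r, _, rfl, hr, List.cons_ne_nil _ _, fun p hp => (hmem p hp).2⟩
    · rintro p (_ | ⟨_, hp⟩)
      exacts [hrW, (hmem p hp).1]
    · rintro _ ⟨⟩
      rw [Set.mem_singleton_iff.1 hr]
      exact ((hmem q List.mem_cons_self).2).symm

end

theorem support_generating_function_general
    {L : Type*} [Fintype L]
    (W : Set ℝ)
    (l₀ : L)
    (s : ℝ) :
    (∑' y : {a : List (ℝ × L) // MemY W l₀ a},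
        ENNReal.ofReal (Real.exp (-rlWeight (y : List (ℝ × L)) * s)) =
      ((Fintype.card L : ℝ≥0∞) - 1) * GW W s ^ 2 /
        (1 - ((Fintype.card L : ℝ≥0∞) - 2) * GW W s)) ∧
    (∑' y : {a : List (ℝ × L) // MemY W l₀ a},
        ENNReal.ofReal (Real.exp (-rlWeight (y : List (ℝ × L)) * s)) =
      GW W s * (((Fintype.card L : ℝ≥0∞) - 1) * GW W s) *
        ∑' k : ℕ, (((Fintype.card L : ℝ≥0∞) - 2) * GW W s) ^ k) := by
  have htails : ∀ b n m, IsAvoidingString W l₀ (n + 1) b → IsAvoidingString W l₀ (m + 1) b →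
      n = m := fun b n m hn hm => by simpa [hn.1] using hm.1
  change ∑' y : {a // MemY W l₀ a}, expWeight s y.1 = _ ∧
    ∑' y : {a // MemY W l₀ a}, expWeight s y.1 = _
  have hseries : ∑' y : {a // MemY W l₀ a}, expWeight s y.1 =
      GW W s * (((Fintype.card L : ℝ≥0∞) - 1) * GW W s) *
        ∑' k : ℕ, (((Fintype.card L : ℝ≥0∞) - 2) * GW W s) ^ k := by
    rw [tsum_expWeight_of_iff_cons W s _ _ (fun _ => {l₀}) 1 (memY_iff W l₀) (by simp),
      ENNReal.tsum_subtype_exists _ htails,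
      tsum_congr (tsum_expWeight_isAvoidingString_succ W l₀ s), ENNReal.tsum_mul_left,
      ENNReal.natCast_sub, ENNReal.natCast_sub]
    push_cast
    ring
  refine ⟨?_, hseries⟩
  rw [hseries, ENNReal.tsum_geometric, ENNReal.div_eq_inv_mul]
  ring

/-- **Generating function of the support set `𝒴`** (equation (24) of the paper): for
every `s` with `(|L|-2)·G_W(s) < 1`,
`∑_{y∈𝒴} exp(-w(y)·s) = (|L|-1)·G_W(s)²/(1-(|L|-2)·G_W(s))
                      = G_W(s)·(|L|-1)·G_W(s)·∑_{k=0}^∞ ((|L|-2)·G_W(s))^k`. -/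
theorem support_generating_function
    {L : Type*} [Fintype L] (hL : 2 ≤ Fintype.card L)
    (W : Set ℝ) (hWne : W.Nonempty) (hWc : W.Countable) (hWpos : ∀ ν ∈ W, 0 < ν)
    (l₀ : L)
    (s : ℝ) (hs : ((Fintype.card L : ℝ≥0∞) - 2) * GW W s < 1) :
    (∑' y : {a : List (ℝ × L) // MemY W l₀ a},
        ENNReal.ofReal (Real.exp (-rlWeight (y : List (ℝ × L)) * s)) =
      ((Fintype.card L : ℝ≥0∞) - 1) * GW W s ^ 2 /
        (1 - ((Fintype.card L : ℝ≥0∞) - 2) * GW W s)) ∧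
    (∑' y : {a : List (ℝ × L) // MemY W l₀ a},
        ENNReal.ofReal (Real.exp (-rlWeight (y : List (ℝ × L)) * s)) =
      GW W s * (((Fintype.card L : ℝ≥0∞) - 1) * GW W s) *
        ∑' k : ℕ, (((Fintype.card L : ℝ≥0∞) - 2) * GW W s) ^ k) :=
  support_generating_function_general W l₀ s
end

section
/- Let W be a nonempty countable subset of the positive reals and L a finite set of labels with |L| ≥ 2, fix l₀ ∈ L, and let 𝒴 be the set of strings of ⟨W,L⟩ with at least two runs whose first run has label l₀ and whose subsequent runs all have labels different from l₀. Suppose C > 0 satisfies (|L|−1)·G_W(C) = 1, where G_W(s) = Σ_{ν∈W} exp(−ν·s). Then Σ_{y∈𝒴} exp(−w(y)·C) = 1, i.e., p_Y(y) := exp(−w(y)·C) defines a probability mass function on 𝒴. -/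
open scoped ENNReal

/-!
Cut a string of `𝒴` into its first run `r` (label `l₀`), its second run `b`, and the chain `c`
of runs after `b`. Past the first run, every run has exactly `|L| - 2` admissible labels (neither
`l₀` nor the label before it), so the continuations of length `k` after `b` have total weight
`((|L| - 2) G)^k`, and the geometric series gives `(1 - (|L| - 2) G)⁻¹ = |L| - 1`, because
`(|L| - 1) G = 1`. The pair `(r, b)` contributes `G · (|L| - 1) G`, so the total weight is
`G · (|L| - 1) G · (|L| - 1) = 1`.
-/

theorem ENNReal.tsum_subtype_eq_tsum_fiberwise {β γ : Type*} (P : β → Prop) (g : β → γ)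
    (F : β → ℝ≥0∞) :
    ∑' x : {x // P x}, F x = ∑' k, ∑' x : {x // P x ∧ g x = k}, F x := by
  rw [← ENNReal.tsum_fiberwise _ (fun x : {x // P x} => g x)]
  exact tsum_congr fun k => (Equiv.subtypeSubtypeEquivSubtypeInter P (g · = k)).tsum_eq (F ·)

theorem ENNReal.inv_one_sub_mul_of_add_one_mul_eq_one {a G : ℝ≥0∞} (h : (a + 1) * G = 1) :
    (1 - a * G)⁻¹ = a + 1 := by
  have hsum : 1 = G + a * G := by rw [← h]; ring
  have haG : a * G ≠ ⊤ := ne_top_of_le_ne_top ENNReal.one_ne_top (hsum ▸ le_add_self)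
  rw [ENNReal.sub_eq_of_eq_add haG hsum, ← ENNReal.eq_inv_of_mul_eq_one_left h]

section IsChain

variable {α : Type*} (R : α → α → Prop)

def consIsChainEquiv (a : α) (k : ℕ) :
    {c : List α // (a :: c).IsChain R ∧ c.length = k + 1} ≃
      Σ b : {b // R a b}, {c : List α // (b.1 :: c).IsChain R ∧ c.length = k} where
  toFun
    | ⟨b :: c, h⟩ => ⟨⟨b, (List.isChain_cons_cons.1 h.1).1⟩, c,
        (List.isChain_cons_cons.1 h.1).2, Nat.succ_injective h.2⟩
  invFun x := ⟨x.1.1 :: x.2.1, x.2.2.1.cons_cons x.1.2, by simp [x.2.2.2]⟩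
  left_inv
    | ⟨_ :: _, _⟩ => rfl
  right_inv _ := rfl

variable (f : α → ℝ≥0∞)

theorem tsum_isChain_length_succ (a : α) (k : ℕ) :
    ∑' c : {c : List α // (a :: c).IsChain R ∧ c.length = k + 1}, (c.1.map f).prod =
      ∑' b : {b // R a b}, f b *
        ∑' c : {c : List α // (b.1 :: c).IsChain R ∧ c.length = k}, (c.1.map f).prod := by
  rw [← (consIsChainEquiv R a k).symm.tsum_eq, ENNReal.tsum_sigma']
  simp_rw [← ENNReal.tsum_mul_left]
  rfl

variable {R f} {s : Set α} {q : ℝ≥0∞}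

theorem tsum_isChain_length (hR : ∀ a b, R a b → b ∈ s)
    (hq : ∀ a ∈ s, ∑' b : {b // R a b}, f b = q) (k : ℕ) {a : α} (ha : a ∈ s) :
    ∑' c : {c : List α // (a :: c).IsChain R ∧ c.length = k}, (c.1.map f).prod = q ^ k := by
  induction k generalizing a with
  | zero =>
    let : Unique {c : List α // (a :: c).IsChain R ∧ c.length = 0} :=
      ⟨⟨⟨[], List.isChain_singleton a, rfl⟩⟩,
        fun c => Subtype.ext (List.eq_nil_of_length_eq_zero c.2.2)⟩
    rw [tsum_fintype, Fintype.sum_unique, pow_zero]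
    rfl
  | succ k ih =>
    calc _ = ∑' b : {b // R a b}, f b * q ^ k := by
          rw [tsum_isChain_length_succ]
          exact tsum_congr fun b => by rw [ih (hR a b b.2)]
      _ = q ^ (k + 1) := by rw [ENNReal.tsum_mul_right, hq a ha, pow_succ']

theorem tsum_isChain (hR : ∀ a b, R a b → b ∈ s)
    (hq : ∀ a ∈ s, ∑' b : {b // R a b}, f b = q) {a : α} (ha : a ∈ s) :
    ∑' c : {c : List α // (a :: c).IsChain R}, (c.1.map f).prod = (1 - q)⁻¹ := by
  rw [ENNReal.tsum_subtype_eq_tsum_fiberwise _ List.length fun c => (c.map f).prod,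
    ← ENNReal.tsum_geometric]
  exact tsum_congr fun k => tsum_isChain_length hR hq k ha

end IsChain

section RunLength

variable {L : Type*} (W : Set ℝ) (l₀ : L) (C : ℝ)

noncomputable def runWeight (r : ℝ × L) : ℝ≥0∞ :=
  ENNReal.ofReal (Real.exp (-r.1 * C))

theorem ofReal_exp_neg_rlWeight_mul (a : List (ℝ × L)) :
    ENNReal.ofReal (Real.exp (-rlWeight a * C)) = (a.map (runWeight C)).prod := by
  induction a with
  | nil => simp [rlWeight]
  | cons r a ih =>
    rw [List.map_cons, List.prod_cons, ← ih, runWeight,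
      ← ENNReal.ofReal_mul (Real.exp_nonneg _), ← Real.exp_add, rlWeight, rlWeight,
      List.map_cons, List.sum_cons]
    ring_nf

theorem tsum_runWeight_label (S : L → Prop) [Finite {l // S l}] :
    ∑' r : {r : ℝ × L // r.1 ∈ W ∧ S r.2}, runWeight C r.1 =
      Nat.card {l // S l} * GW W C := by
  rw [← Equiv.subtypeProdEquivProd.symm.tsum_eq, ENNReal.tsum_prod', GW,
    ← ENNReal.tsum_mul_left]
  refine tsum_congr fun ν => ?_
  change ∑' _ : {l // S l}, ENNReal.ofReal (Real.exp (-(ν : ℝ) * C)) = _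
  rw [ENNReal.tsum_const, ENat.card_eq_coe_natCard, ENat.toENNReal_coe]

/-- The runs that may follow the run `p` once the first run of a string of `𝒴` is past. -/
def CanFollow (p q : ℝ × L) : Prop :=
  q.1 ∈ W ∧ q.2 ≠ l₀ ∧ p.2 ≠ q.2

theorem natCard_ne_and_ne [Fintype L] [DecidableEq L] (m : L) :
    Nat.card {l // l ≠ l₀ ∧ m ≠ l} = Fintype.card L - ({l₀, m} : Finset L).card := by
  rw [Nat.card_eq_fintype_card, Fintype.card_subtype, ← Finset.card_compl]
  congr 1
  ext
  simp [eq_comm]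

theorem tsum_runWeight_canFollow [Fintype L] [DecidableEq L] (p : ℝ × L) :
    ∑' b : {b // CanFollow W l₀ p b}, runWeight C b.1 =
      (Fintype.card L - ({l₀, p.2} : Finset L).card : ℕ) * GW W C := by
  rw [← natCard_ne_and_ne]
  exact tsum_runWeight_label W C fun l => l ≠ l₀ ∧ p.2 ≠ l

theorem isChain_canFollow_iff {a : ℝ × L} {c : List (ℝ × L)} :
    (a :: c).IsChain (CanFollow W l₀) ↔
      (∀ q ∈ c, q.1 ∈ W ∧ q.2 ≠ l₀) ∧ (a :: c).IsChain fun p q => p.2 ≠ q.2 := by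
  induction c generalizing a with
  | nil => simp
  | cons b c ih =>
    simp only [List.isChain_cons_cons, ih, List.forall_mem_cons, CanFollow]
    tauto

theorem memY_cons_cons_iff {r b : ℝ × L} {c : List (ℝ × L)} :
    MemY W l₀ (r :: b :: c) ↔
      (r.1 ∈ W ∧ r.2 = l₀) ∧ (r :: b :: c).IsChain (CanFollow W l₀) := by
  rw [isChain_canFollow_iff]
  simp only [MemY, IsRLString, List.forall_mem_cons, forall_and, List.cons.injEq, ne_eq,
    List.cons_ne_nil, not_false_eq_true, true_and, and_assoc, exists_and_left, exists_eq_left']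
  constructor
  · rintro ⟨hr, hb, hc, hchain, hr₀, hb₀, hc₀⟩
    exact ⟨hr, hr₀, hb, hc, hb₀, hc₀, hchain⟩
  · rintro ⟨hr, hr₀, hb, hc, hb₀, hc₀, hchain⟩
    exact ⟨hr, hb, hc, hchain, hr₀, hb₀, hc₀⟩

noncomputable def memYEquiv :
    (Σ r : {r : ℝ × L // r.1 ∈ W ∧ r.2 = l₀}, Σ b : {b // CanFollow W l₀ r.1 b},
      {c : List (ℝ × L) // (b.1 :: c).IsChain (CanFollow W l₀)}) ≃ {y // MemY W l₀ y} :=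
  Equiv.ofBijective
    (fun x => ⟨x.1.1 :: x.2.1.1 :: x.2.2.1,
      (memY_cons_cons_iff W l₀).2 ⟨x.1.2, x.2.2.2.cons_cons x.2.1.2⟩⟩) <| by
    constructor
    · rintro ⟨⟨r, _⟩, ⟨b, _⟩, ⟨c, _⟩⟩ ⟨⟨r', _⟩, ⟨b', _⟩, ⟨c', _⟩⟩ h
      simp only [Subtype.mk.injEq, List.cons.injEq] at h
      obtain ⟨rfl, rfl, rfl⟩ := h
      rfl
    · rintro ⟨y, hy⟩
      obtain ⟨r, b, c, rfl⟩ : ∃ r b c, y = r :: b :: c := by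
        obtain ⟨-, r, _ | ⟨b, c⟩, rfl, -, hne, -⟩ := hy
        · exact absurd rfl hne
        · exact ⟨r, b, c, rfl⟩
      obtain ⟨hr, hchain⟩ := (memY_cons_cons_iff W l₀).1 hy
      obtain ⟨hb, hc⟩ := List.isChain_cons_cons.1 hchain
      exact ⟨⟨⟨r, hr⟩, ⟨b, hb⟩, ⟨c, hc⟩⟩, rfl⟩

theorem tsum_memY_eq :
    ∑' y : {y // MemY W l₀ y}, ENNReal.ofReal (Real.exp (-rlWeight y.1 * C)) =
      ∑' r : {r : ℝ × L // r.1 ∈ W ∧ r.2 = l₀}, runWeight C r.1 *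
        ∑' b : {b // CanFollow W l₀ r.1 b}, runWeight C b.1 *
          ∑' c : {c // (b.1 :: c).IsChain (CanFollow W l₀)}, (c.1.map (runWeight C)).prod := by
  rw [← (memYEquiv W l₀).tsum_eq, ENNReal.tsum_sigma']
  simp_rw [ENNReal.tsum_sigma', ← ENNReal.tsum_mul_left, ofReal_exp_neg_rlWeight_mul]
  rfl

theorem tsum_runWeight_canFollow_of_eq [Fintype L] {n : ℕ} (hn : Fintype.card L = n + 2)
    {r : ℝ × L} (hr : r.2 = l₀) :
    ∑' b : {b // CanFollow W l₀ r b}, runWeight C b.1 = (n + 1) * GW W C := by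
  classical
  rw [tsum_runWeight_canFollow, hr, Finset.pair_eq_singleton, Finset.card_singleton, hn,
    show n + 2 - 1 = n + 1 by omega, Nat.cast_succ]

theorem tsum_runWeight_canFollow_of_ne [Fintype L] {n : ℕ} (hn : Fintype.card L = n + 2)
    {p : ℝ × L} (hp : p.2 ≠ l₀) :
    ∑' b : {b // CanFollow W l₀ p b}, runWeight C b.1 = n * GW W C := by
  classical
  rw [tsum_runWeight_canFollow, Finset.card_pair (Ne.symm hp), hn, Nat.add_sub_cancel]

theorem tsum_isChain_canFollow [Fintype L] {n : ℕ} (hn : Fintype.card L = n + 2)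
    (hG : ((n : ℝ≥0∞) + 1) * GW W C = 1) {b : ℝ × L} (hb : b.2 ≠ l₀) :
    ∑' c : {c // (b :: c).IsChain (CanFollow W l₀)}, (c.1.map (runWeight C)).prod = n + 1 := by
  rw [tsum_isChain (s := {b : ℝ × L | b.2 ≠ l₀}) (fun _ _ h => h.2.1)
    (fun _ hp => tsum_runWeight_canFollow_of_ne W l₀ C hn hp) hb]
  exact ENNReal.inv_one_sub_mul_of_add_one_mul_eq_one hG

end RunLength

theorem support_pmf_general
    {L : Type*} [Fintype L] (hL : 2 ≤ Fintype.card L)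
    (W : Set ℝ)
    (l₀ : L)
    (C : ℝ)
    (hCeq : ((Fintype.card L : ℝ≥0∞) - 1) * GW W C = 1) :
    ∑' y : {a : List (ℝ × L) // MemY W l₀ a},
      ENNReal.ofReal (Real.exp (-rlWeight (y : List (ℝ × L)) * C)) = 1 := by
  obtain ⟨n, hn⟩ : ∃ n, Fintype.card L = n + 2 := ⟨_, (Nat.sub_add_cancel hL).symm⟩
  have hG : ((n : ℝ≥0∞) + 1) * GW W C = 1 := by
    have hsub : (n : ℝ≥0∞) + 2 - 1 = n + 1 :=
      ENNReal.sub_eq_of_eq_add ENNReal.one_ne_top (by ring)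
    rwa [hn, Nat.cast_add, Nat.cast_ofNat, hsub] at hCeq
  rw [tsum_memY_eq]
  calc _ = ∑' r : {r : ℝ × L // r.1 ∈ W ∧ r.2 = l₀},
          runWeight C r.1 * ((n + 1) * GW W C * (n + 1)) := by
        refine tsum_congr fun r => congrArg _ ?_
        rw [← tsum_runWeight_canFollow_of_eq W l₀ C hn r.2.2, ← ENNReal.tsum_mul_right]
        exact tsum_congr fun b => congrArg _ (tsum_isChain_canFollow W l₀ C hn hG b.2.2.1)
    _ = GW W C * ((n + 1) * GW W C * (n + 1)) := by
        rw [ENNReal.tsum_mul_right, tsum_runWeight_label W C (· = l₀)]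
        simp
    _ = ((n + 1) * GW W C) * ((n + 1) * GW W C) := by ring
    _ = 1 := by rw [hG, one_mul]

/-- If `C > 0` satisfies `(|L|-1)·G_W(C) = 1`, then `∑_{y∈𝒴} exp(-w(y)·C) = 1`,
i.e., `p_Y(y) := exp(-w(y)·C)` defines a probability mass function on `𝒴`. -/
theorem support_pmf
    {L : Type*} [Fintype L] (hL : 2 ≤ Fintype.card L)
    (W : Set ℝ) (hWne : W.Nonempty) (hWc : W.Countable) (hWpos : ∀ ν ∈ W, 0 < ν)
    (l₀ : L)
    (C : ℝ) (hC : 0 < C)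
    (hCeq : ((Fintype.card L : ℝ≥0∞) - 1) * GW W C = 1) :
    ∑' y : {a : List (ℝ × L) // MemY W l₀ a},
      ENNReal.ofReal (Real.exp (-rlWeight (y : List (ℝ × L)) * C)) = 1 :=
  support_pmf_general hL W l₀ C hCeq
end

section
/- Let Z be a countable type, w : Z → ℝ a weight function with w(z) > 0 for all z, and R > 0 a real number such that Σ_{z∈Z} exp(−w(z)·R) = 1. Define p(z) := exp(−w(z)·R). Then p is a probability mass function on Z, its entropy satisfies the identity H(p) := Σ_{z∈Z} −p(z)·ln(p(z)) = R · Σ_{z∈Z} p(z)·w(z) (as an identity in [0,∞]), and if moreover Σ_{z∈Z} p(z)·w(z) < ∞, then the entropy rate of the process Z₁, Z₂, … of independent, identically distributed random variables with common PMF p equals R, i.e., limsup_{k→∞} H(Z₁,…,Z_k) / E[w(Z₁)+⋯+w(Z_k)] = R. -/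
open scoped ENNReal
open Filter

/-!
Since `log p(z) = -R·w(z)`, the entropy density `-p log p` is pointwise `R` times the weight
density `p·w`. The law of an IID block `(Z₁, …, Zₙ)` is `exp (-R·(w(z₁) + ⋯ + w(zₙ)))`, of the
same form for the additive weight, so the block entropy is exactly `R` times the expected block
weight `n·E[w]`; as `E[w]` is finite and positive, every ratio in the `limsup` equals `R`.
-/

namespace ENNReal

variable {ι Z : Type*} [Fintype ι]

theorem tsum_fin_prod : ∀ (n : ℕ) (q : Fin n → Z → ℝ≥0∞),
    ∑' f : Fin n → Z, ∏ i, q i (f i) = ∏ i, ∑' z, q i z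
  | 0, q => by simp
  | n + 1, q => by
    rw [← (Fin.consEquiv fun _ : Fin (n + 1) => Z).tsum_eq, ENNReal.tsum_prod',
      Fin.prod_univ_succ, ← tsum_fin_prod n, ← ENNReal.tsum_mul_right]
    refine tsum_congr fun a => ?_
    rw [← ENNReal.tsum_mul_left]
    simp [Fin.consEquiv, Fin.prod_univ_succ]

theorem tsum_pi_prod (q : ι → Z → ℝ≥0∞) :
    ∑' f : ι → Z, ∏ i, q i (f i) = ∏ i, ∑' z, q i z := by
  let e := Fintype.equivFin ι
  rw [← (e.arrowCongr (Equiv.refl Z)).symm.tsum_eq, ← e.symm.prod_comp, ← tsum_fin_prod]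
  refine tsum_congr fun f => ?_
  rw [← e.symm.prod_comp]
  simp

theorem tsum_pi_prod_mul_sum {q : Z → ℝ≥0∞} (hq : ∑' z, q z = 1) (r : Z → ℝ≥0∞) :
    ∑' f : ι → Z, (∏ i, q (f i)) * ∑ i, r (f i) = Fintype.card ι * ∑' z, q z * r z := by
  classical
  have hmarginal : ∀ i, ∑' f : ι → Z, (∏ j, q (f j)) * r (f i) = ∑' z, q z * r z := by
    intro i
    calc ∑' f : ι → Z, (∏ j, q (f j)) * r (f i)
        = ∑' f : ι → Z, ∏ j, q (f j) * (if j = i then r (f j) else 1) := by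
          simp only [Finset.prod_mul_distrib, Finset.prod_ite_eq', Finset.mem_univ, if_true]
      _ = ∏ j, (if j = i then ∑' z, q z * r z else 1) := by
          rw [tsum_pi_prod fun j z => q z * if j = i then r z else 1]
          refine Finset.prod_congr rfl fun j _ => ?_
          split_ifs <;> simp [hq]
      _ = ∑' z, q z * r z := by simp
  simp only [Finset.mul_sum]
  rw [Summable.tsum_finsetSum fun i _ => ENNReal.summable]
  simp [hmarginal]

end ENNReal

theorem neg_mul_log_eq_of_eq_exp {x a R : ℝ} (hx : x = Real.exp (-a * R)) :
    -(x * Real.log x) = R * (x * a) := by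
  rw [hx, Real.log_exp]
  ring

theorem tsum_ofReal_pi_prod_mul_sum {ι Z : Type*} [Fintype ι] {p w : Z → ℝ}
    (hp : ∀ z, 0 ≤ p z) (hw : ∀ z, 0 ≤ w z) (hp1 : ∑' z, ENNReal.ofReal (p z) = 1) :
    ∑' f : ι → Z, ENNReal.ofReal ((∏ i, p (f i)) * ∑ i, w (f i)) =
      Fintype.card ι * ∑' z, ENNReal.ofReal (p z * w z) := by
  have hfactor : ∀ f : ι → Z, ENNReal.ofReal ((∏ i, p (f i)) * ∑ i, w (f i)) =
      (∏ i, ENNReal.ofReal (p (f i))) * ∑ i, ENNReal.ofReal (w (f i)) := fun f => by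
    rw [ENNReal.ofReal_mul (Finset.prod_nonneg fun i _ => hp _),
      ENNReal.ofReal_prod_of_nonneg fun i _ => hp _, ENNReal.ofReal_sum_of_nonneg fun i _ => hw _]
  rw [tsum_congr hfactor, ENNReal.tsum_pi_prod_mul_sum hp1 fun z => ENNReal.ofReal (w z)]
  simp only [ENNReal.ofReal_mul (hp _)]

theorem tsum_pi_neg_mul_log_div_tsum_weight {ι Z : Type*} [Fintype ι] [Nonempty ι]
    {w : Z → ℝ} (hw : ∀ z, 0 < w z) {R : ℝ} {p : Z → ℝ} (hp : ∀ z, p z = Real.exp (-w z * R))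
    (hp1 : ∑' z, ENNReal.ofReal (p z) = 1) (hfin : ∑' z, ENNReal.ofReal (p z * w z) ≠ ⊤) :
    (∑' f : ι → Z, -((∏ i, p (f i)) * Real.log (∏ i, p (f i)))) /
      (∑' f : ι → Z, (∏ i, p (f i)) * ∑ i, w (f i)) = R := by
  have hp_pos : ∀ z, 0 < p z := fun z => (hp z).symm ▸ Real.exp_pos _
  have hnum : ∀ f : ι → Z, -((∏ i, p (f i)) * Real.log (∏ i, p (f i))) =
      R * ((∏ i, p (f i)) * ∑ i, w (f i)) := fun f =>
    neg_mul_log_eq_of_eq_exp <| by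
      rw [← Finset.sum_neg_distrib, Finset.sum_mul, Real.exp_sum]
      exact Finset.prod_congr rfl fun i _ => hp _
  obtain ⟨z₀⟩ : Nonempty Z := by
    by_contra hZ
    simp [not_nonempty_iff.mp hZ] at hp1
  have hmean_ne_zero : ∑' z, ENNReal.ofReal (p z * w z) ≠ 0 := fun h =>
    (ENNReal.ofReal_eq_zero.mp (ENNReal.tsum_eq_zero.mp h z₀)).not_gt
      (mul_pos (hp_pos z₀) (hw z₀))
  have hden : ∑' f : ι → Z, (∏ i, p (f i)) * ∑ i, w (f i) =
      (Fintype.card ι * ∑' z, ENNReal.ofReal (p z * w z)).toReal := by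
    rw [← tsum_ofReal_pi_prod_mul_sum (fun z => (hp_pos z).le) (fun z => (hw z).le) hp1,
      ENNReal.tsum_toReal_eq fun _ => ENNReal.ofReal_ne_top]
    refine tsum_congr fun f => (ENNReal.toReal_ofReal ?_).symm
    exact mul_nonneg (Finset.prod_nonneg fun i _ => (hp_pos _).le)
      (Finset.sum_nonneg fun i _ => (hw _).le)
  have hden_pos : 0 < ∑' f : ι → Z, (∏ i, p (f i)) * ∑ i, w (f i) := by
    rw [hden]
    exact ENNReal.toReal_pos (mul_ne_zero (by simp) hmean_ne_zero)
      (ENNReal.mul_ne_top (ENNReal.natCast_ne_top _) hfin)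
  rw [tsum_congr hnum, tsum_mul_left, mul_div_cancel_right₀ _ hden_pos.ne']

theorem maxentropic_pmf_general
    {Z : Type*}
    (w : Z → ℝ) (hw : ∀ z, 0 < w z)
    (R : ℝ)
    (hsum : ∑' z : Z, ENNReal.ofReal (Real.exp (-w z * R)) = 1)
    (p : Z → ℝ) (hp : ∀ z, p z = Real.exp (-w z * R)) :
    ((∀ z, 0 ≤ p z) ∧ ∑' z : Z, ENNReal.ofReal (p z) = 1) ∧
    (∑' z : Z, ENNReal.ofReal (-(p z * Real.log (p z))) =
      ENNReal.ofReal R * ∑' z : Z, ENNReal.ofReal (p z * w z)) ∧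
    ((∑' z : Z, ENNReal.ofReal (p z * w z)) ≠ ⊤ →
      limsup (fun k : ℕ =>
        (∑' zv : Fin (k + 1) → Z,
          -((∏ i, p (zv i)) * Real.log (∏ i, p (zv i)))) /
        (∑' zv : Fin (k + 1) → Z,
          (∏ i, p (zv i)) * ∑ i, w (zv i))) atTop = R) := by
  have hp_nonneg : ∀ z, 0 ≤ p z := fun z => (hp z).symm ▸ (Real.exp_pos _).le
  have hp1 : ∑' z, ENNReal.ofReal (p z) = 1 := by simpa only [hp] using hsum
  refine ⟨⟨hp_nonneg, hp1⟩, ?_, fun hfin => ?_⟩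
  · simp_rw [neg_mul_log_eq_of_eq_exp (hp _), ← ENNReal.tsum_mul_left]
    exact tsum_congr fun z => ENNReal.ofReal_mul' (mul_nonneg (hp_nonneg z) (hw z).le)
  · simp only [tsum_pi_neg_mul_log_div_tsum_weight hw hp hp1 hfin, limsup_const]

/-- **Proposition 2 of the paper** (maxentropic PMF, after Krause): if `R > 0` solves
`G_Z(R) = ∑_z exp(-w(z)·R) = 1`, then `p(z) = exp(-w(z)·R)` is a PMF on `Z`, its entropy
satisfies `H(p) = R·∑_z p(z)·w(z)` (as an identity in `[0,∞]`), and if the expected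
weight is finite then the IID process with common PMF `p` has entropy rate `R`. -/
theorem maxentropic_pmf
    {Z : Type*} [Countable Z]
    (w : Z → ℝ) (hw : ∀ z, 0 < w z)
    (R : ℝ) (hR : 0 < R)
    (hsum : ∑' z : Z, ENNReal.ofReal (Real.exp (-w z * R)) = 1)
    (p : Z → ℝ) (hp : ∀ z, p z = Real.exp (-w z * R)) :
    ((∀ z, 0 ≤ p z) ∧ ∑' z : Z, ENNReal.ofReal (p z) = 1) ∧
    (∑' z : Z, ENNReal.ofReal (-(p z * Real.log (p z))) =
      ENNReal.ofReal R * ∑' z : Z, ENNReal.ofReal (p z * w z)) ∧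
    ((∑' z : Z, ENNReal.ofReal (p z * w z)) ≠ ⊤ →
      limsup (fun k : ℕ =>
        (∑' zv : Fin (k + 1) → Z,
          -((∏ i, p (zv i)) * Real.log (∏ i, p (zv i)))) /
        (∑' zv : Fin (k + 1) → Z,
          (∏ i, p (zv i)) * ∑ i, w (zv i))) atTop = R) :=
  maxentropic_pmf_general w hw R hsum p hp
end

section
/- Let W be a nonempty countable subset of the positive reals and L a finite set of labels with |L| ≥ 2, fix l₀ ∈ L, and let 𝒴 be the set of strings of ⟨W,L⟩ with at least two runs whose first run has label l₀ and whose subsequent runs all have labels different from l₀. Suppose C > 0 satisfies (|L|−1)·G_W(C) = 1, where G_W(s) = Σ_{ν∈W} exp(−ν·s), and suppose Σ_{y∈𝒴} exp(−w(y)·C)·w(y) < ∞. Let Y₁, Y₂, … be independent and identically distributed with values in 𝒴 and common PMF p_Y(y) = exp(−w(y)·C). Then Y is an input process of ⟨W,L⟩ — i.e., the supports X_k = {y₁ ++ ⋯ ++ y_k | p_Y(y₁)⋯p_Y(y_k) > 0} satisfy ⋃_{k≥1} X_k ⊆ ⟨W,L⟩ and X_j ∩ X_k = ∅ for j ≠ k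 — and its entropy rate limsup_{k→∞} H(Y₁,…,Y_k)/E[w(Y₁)+⋯+w(Y_k)] equals C. -/
open scoped ENNReal

open Filter

/-! Each string of `𝒴` contains the label `l₀` exactly once, at its start, and ends with a
different label. Hence concatenations of strings of `𝒴` are strings of `⟨W,L⟩`, and the number
of blocks is recovered by counting occurrences of `l₀`.
Since `-log p_Y(y) = C·w(y)`, the entropy of `k` IID blocks is exactly `C` times their expected
weight, so the only work is to show that the latter is finite and positive: `G_W(C) < ∞` forces
`W` to have a least element `m > 0`, whence `p_Y ≤ p_Y·w/m` is summable. -/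

open Real

section Strings

variable {L : Type*} {W : Set ℝ} {l₀ : L}

lemma MemY.head_label {a : List (ℝ × L)} (h : MemY W l₀ a) : ∀ x ∈ a.head?, x.2 = l₀ := by
  obtain ⟨-, r, rest, rfl, hr, -, -⟩ := h
  simpa using hr

lemma MemY.getLast_label_ne {a : List (ℝ × L)} (h : MemY W l₀ a) :
    ∀ x ∈ a.getLast?, x.2 ≠ l₀ := by
  obtain ⟨-, r, rest, rfl, -, hrest, hall⟩ := h
  intro x hx
  obtain ⟨-, rfl⟩ := List.mem_getLast?_eq_getLast hx
  rw [List.getLast_cons hrest]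
  exact hall _ (List.getLast_mem hrest)

lemma MemY.countP_label_eq_one [DecidableEq L] {a : List (ℝ × L)} (h : MemY W l₀ a) :
    a.countP (fun r => r.2 = l₀) = 1 := by
  obtain ⟨-, r, rest, rfl, hr, -, hall⟩ := h
  have hrest : rest.countP (fun r => r.2 = l₀) = 0 :=
    List.countP_eq_zero.2 fun q hq => by simpa using hall q hq
  simp [hrest, hr]

lemma memY_pair {ν : ℝ} (hν : ν ∈ W) {l₁ : L} (hl₁ : l₁ ≠ l₀) :
    MemY W l₀ [(ν, l₀), (ν, l₁)] := by
  refine ⟨⟨by simp, by simp [hν], ?_⟩, (ν, l₀), [(ν, l₁)], rfl, rfl, by simp, by simpa using hl₁⟩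
  exact List.isChain_cons_cons.2 ⟨hl₁.symm, List.isChain_singleton _⟩

lemma isRLString_flatten_of_memY {ys : List (List (ℝ × L))} (hne : ys ≠ [])
    (hys : ∀ y ∈ ys, MemY W l₀ y) : IsRLString W ys.flatten := by
  have hnil : [] ∉ ys := fun h => (hys _ h).1.1 rfl
  refine ⟨fun h => ?_, ?_, ?_⟩
  · obtain ⟨y, hy⟩ := List.exists_mem_of_ne_nil ys hne
    exact hnil (List.flatten_eq_nil_iff.1 h y hy ▸ hy)
  · intro r hr
    obtain ⟨y, hy, hry⟩ := List.mem_flatten.1 hr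
    exact (hys y hy).1.2.1 r hry
  · show List.IsChain _ _
    rw [List.isChain_flatten hnil]
    refine ⟨fun y hy => (hys y hy).1.2.2, List.Pairwise.isChain ?_⟩
    refine List.pairwise_of_forall_mem_list fun y hy z hz p hp q hq => ?_
    rw [(hys z hz).head_label q hq]
    exact (hys y hy).getLast_label_ne p hp

lemma countP_flatten_of_memY [DecidableEq L] {ys : List (List (ℝ × L))}
    (hys : ∀ y ∈ ys, MemY W l₀ y) : ys.flatten.countP (fun r => r.2 = l₀) = ys.length := by
  rw [List.countP_flatten, List.map_congr_left fun y hy => (hys y hy).countP_label_eq_one]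
  simp

lemma isRLString_flatten_ofFn {k : ℕ} (yv : Fin (k + 1) → {a // MemY W l₀ a}) :
    IsRLString W (List.ofFn fun i => (yv i : List (ℝ × L))).flatten :=
  isRLString_flatten_of_memY (by simp) (List.forall_mem_ofFn_iff.2 fun i => (yv i).2)

lemma countP_flatten_ofFn [DecidableEq L] {k : ℕ} (yv : Fin k → {a // MemY W l₀ a}) :
    (List.ofFn fun i => (yv i : List (ℝ × L))).flatten.countP (fun r => r.2 = l₀) = k := by
  rw [countP_flatten_of_memY (List.forall_mem_ofFn_iff.2 fun i => (yv i).2), List.length_ofFn]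

lemma le_rlWeight_of_mem {a : List (ℝ × L)} (ha : ∀ r ∈ a, 0 ≤ r.1) {r : ℝ × L} (hr : r ∈ a) :
    r.1 ≤ rlWeight a :=
  List.single_le_sum (by simpa using ha) _ (List.mem_map_of_mem hr)

lemma IsRLString.le_rlWeight {m : ℝ} (hm : ∀ ν ∈ W, m ≤ ν) (hm0 : 0 ≤ m) {a : List (ℝ × L)}
    (ha : IsRLString W a) : m ≤ rlWeight a := by
  obtain ⟨r, hr⟩ := List.exists_mem_of_ne_nil _ ha.1
  exact (hm _ (ha.2.1 r hr)).trans
    (le_rlWeight_of_mem (fun q hq => hm0.trans (hm _ (ha.2.1 q hq))) hr)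

end Strings

lemma GW_ne_top_of_mul_eq_one {W : Set ℝ} {C : ℝ} {c : ℝ≥0∞} (h : c * GW W C = 1) :
    GW W C ≠ ⊤ := by
  intro htop
  rw [htop, ENNReal.mul_top'] at h
  split_ifs at h <;> simp at h

lemma summable_exp_of_GW_ne_top {W : Set ℝ} {C : ℝ} (h : GW W C ≠ ⊤) :
    Summable fun ν : W => exp (-(ν : ℝ) * C) :=
  (ENNReal.summable_toReal h).congr fun _ => ENNReal.toReal_ofReal (exp_pos _).le

/- Summability forces `exp (-ν C) → 0`, i.e. `ν → ∞`, along the cofinite filter, so `W` has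
a least element. -/
lemma exists_isLeast_of_summable_exp {W : Set ℝ} (hW : W.Nonempty) {C : ℝ} (hC : 0 < C)
    (h : Summable fun ν : W => exp (-(ν : ℝ) * C)) : ∃ m, IsLeast W m := by
  have : Nonempty W := hW.to_subtype
  have htop : Tendsto (fun ν : W => (ν : ℝ)) cofinite atTop := by
    refine tendsto_atTop.2 fun b => ?_
    filter_upwards [h.tendsto_cofinite_zero.eventually (gt_mem_nhds (exp_pos (-b * C)))]
      with ν hν
    nlinarith [exp_lt_exp.1 hν]
  obtain ⟨m, hm⟩ := htop.exists_forall_le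
  exact ⟨m, m.2, fun ν hν => hm ⟨ν, hν⟩⟩

section Summability

variable {Y : Type*}

lemma Finset.sum_le_prod_one_add {ι : Type*} (s : Finset ι) {f : ι → ℝ}
    (hf : ∀ i ∈ s, 0 ≤ f i) : ∑ i ∈ s, f i ≤ ∏ i ∈ s, (1 + f i) := by
  classical
  suffices 1 + ∑ i ∈ s, f i ≤ ∏ i ∈ s, (1 + f i) by linarith
  induction s using Finset.induction with
  | empty => simp
  | insert a s ha ih =>
    rw [Finset.sum_insert ha, Finset.prod_insert ha]
    have hs := ih fun i hi => hf i (Finset.mem_insert_of_mem hi)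
    have hfa := hf a (Finset.mem_insert_self a s)
    nlinarith [Finset.sum_nonneg fun i hi => hf i (Finset.mem_insert_of_mem hi)]

lemma Summable.of_mul_right_of_le {p w : Y → ℝ} {m : ℝ} (hm : 0 < m) (hp : ∀ y, 0 ≤ p y)
    (hw : ∀ y, m ≤ w y) (h : Summable (p * w)) : Summable p := by
  refine (h.div_const m).of_nonneg_of_le hp fun y => ?_
  rw [le_div_iff₀ hm]
  exact mul_le_mul_of_nonneg_left (hw y) (hp y)

lemma summable_pi_fin_prod {q : Y → ℝ} (hq : Summable q) (hq0 : ∀ y, 0 ≤ q y) (n : ℕ) :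
    Summable fun yv : Fin n → Y => ∏ i, q (yv i) := by
  induction n with
  | zero => exact Summable.of_finite
  | succ n ih =>
    have hprod : Summable fun p : Y × (Fin n → Y) => q p.1 * ∏ i, q (p.2 i) :=
      Summable.mul_of_nonneg (f := q) (g := fun yv : Fin n → Y => ∏ i, q (yv i)) hq ih hq0
        fun yv => Finset.prod_nonneg fun i _ => hq0 _
    refine (Fin.consEquiv fun _ => Y).summable_iff.1 (hprod.congr fun p => ?_)
    simp [Fin.consEquiv, Fin.prod_univ_succ]

lemma summable_pi_fin_prod_mul_sum {p w : Y → ℝ} (hp : ∀ y, 0 ≤ p y) (hw : ∀ y, 0 ≤ w y)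
    (hsp : Summable p) (hspw : Summable (p * w)) (n : ℕ) :
    Summable fun yv : Fin n → Y => (∏ i, p (yv i)) * ∑ i, w (yv i) := by
  have hq : Summable fun y => p y * (1 + w y) := (hsp.add hspw).congr fun y => by simp [mul_add]
  refine (summable_pi_fin_prod hq (fun y => mul_nonneg (hp y) (by linarith [hw y])) n
    ).of_nonneg_of_le (fun yv => mul_nonneg (Finset.prod_nonneg fun i _ => hp _)
      (Finset.sum_nonneg fun i _ => hw _)) fun yv => ?_
  rw [Finset.prod_mul_distrib]
  exact mul_le_mul_of_nonneg_left (Finset.sum_le_prod_one_add _ fun i _ => hw _)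
    (Finset.prod_nonneg fun i _ => hp _)

end Summability

section Entropy

variable {ι Y : Type*} {C : ℝ}

lemma neg_prod_mul_log_prod_of_gibbs [Fintype ι] {p w : ι → ℝ}
    (hp : ∀ i, p i = exp (-w i * C)) :
    -((∏ i, p i) * log (∏ i, p i)) = C * ((∏ i, p i) * ∑ i, w i) := by
  have hprod : ∏ i, p i = exp (-(∑ i, w i) * C) := by
    simp_rw [hp, ← exp_sum, ← Finset.sum_mul, Finset.sum_neg_distrib]
  rw [hprod, log_exp]
  ring

lemma tsum_entropy_div_tsum_weight_of_gibbs [Nonempty Y] {p w : Y → ℝ}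
    (hp : ∀ y, p y = exp (-w y * C)) (hw : ∀ y, 0 < w y) (hsp : Summable p)
    (hspw : Summable (p * w)) (n : ℕ) [NeZero n] :
    (∑' yv : Fin n → Y, -((∏ i, p (yv i)) * log (∏ i, p (yv i)))) /
      (∑' yv : Fin n → Y, (∏ i, p (yv i)) * ∑ i, w (yv i)) = C := by
  have hp0 : ∀ y, 0 < p y := fun y => (hp y).symm ▸ exp_pos _
  have hpos : 0 < ∑' yv : Fin n → Y, (∏ i, p (yv i)) * ∑ i, w (yv i) := by
    obtain ⟨y⟩ := ‹Nonempty Y›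
    refine (summable_pi_fin_prod_mul_sum (fun y => (hp0 y).le) (fun y => (hw y).le) hsp hspw n
      ).tsum_pos (fun yv => ?_) (fun _ => y) ?_
    · exact mul_nonneg (Finset.prod_nonneg fun i _ => (hp0 _).le)
        (Finset.sum_nonneg fun i _ => (hw _).le)
    · exact mul_pos (Finset.prod_pos fun i _ => hp0 y)
        (Finset.sum_pos (fun i _ => hw y) Finset.univ_nonempty)
  simp_rw [neg_prod_mul_log_prod_of_gibbs fun i => hp _, tsum_mul_left]
  exact mul_div_cancel_right₀ C hpos.ne'

end Entropy

theorem maxentropic_input_process_general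
    {L : Type*} [Fintype L] (hL : 2 ≤ Fintype.card L)
    (W : Set ℝ) (hWne : W.Nonempty) (hWpos : ∀ ν ∈ W, 0 < ν)
    (l₀ : L)
    (C : ℝ) (hC : 0 < C)
    (hCeq : ((Fintype.card L : ℝ≥0∞) - 1) * GW W C = 1)
    (hfin : Summable fun y : {a : List (ℝ × L) // MemY W l₀ a} =>
      Real.exp (-rlWeight (y : List (ℝ × L)) * C) * rlWeight (y : List (ℝ × L)))
    (pY : {a : List (ℝ × L) // MemY W l₀ a} → ℝ)
    (hpY : ∀ y, pY y = Real.exp (-rlWeight (y : List (ℝ × L)) * C))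
    (X : ℕ → Set (List (ℝ × L)))
    (hX : ∀ k, X k = {x | ∃ yv : Fin k → {a : List (ℝ × L) // MemY W l₀ a},
      0 < ∏ i, pY (yv i) ∧ x = (List.ofFn fun i => ((yv i : List (ℝ × L)))).flatten}) :
    ((⋃ k : ℕ, X (k + 1)) ⊆ {a : List (ℝ × L) | IsRLString W a}) ∧
    (∀ j k, 1 ≤ j → 1 ≤ k → j ≠ k → X j ∩ X k = ∅) ∧
    limsup (fun k : ℕ =>
      (∑' yv : Fin (k + 1) → {a : List (ℝ × L) // MemY W l₀ a},
        -((∏ i, pY (yv i)) * Real.log (∏ i, pY (yv i)))) /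
      (∑' yv : Fin (k + 1) → {a : List (ℝ × L) // MemY W l₀ a},
        (∏ i, pY (yv i)) * ∑ i, rlWeight ((yv i : List (ℝ × L))))) atTop = C := by
  classical
  refine ⟨?_, ?_, ?_⟩
  · simp only [Set.iUnion_subset_iff, hX]
    rintro k _ ⟨yv, -, rfl⟩
    exact isRLString_flatten_ofFn yv
  · have hcount : ∀ m, ∀ x ∈ X m, x.countP (fun r => r.2 = l₀) = m := by
      simp only [hX]
      rintro m _ ⟨yv, -, rfl⟩
      exact countP_flatten_ofFn yv
    exact fun j k _ _ hjk => Set.eq_empty_of_forall_notMem fun x ⟨hj, hk⟩ =>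
      hjk ((hcount j x hj).symm.trans (hcount k x hk))
  · obtain ⟨m, hm⟩ := exists_isLeast_of_summable_exp hWne hC
      (summable_exp_of_GW_ne_top (GW_ne_top_of_mul_eq_one hCeq))
    have hm0 : 0 < m := hWpos m hm.1
    have hw : ∀ y : {a // MemY W l₀ a}, m ≤ rlWeight y.1 := fun y =>
      y.2.1.le_rlWeight hm.2 hm0.le
    have hspw : Summable (pY * fun y => rlWeight y.1) := hfin.congr fun y => by simp [hpY]
    have hsp : Summable pY := hspw.of_mul_right_of_le hm0 (fun y => (hpY y ▸ exp_pos _).le) hw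
    obtain ⟨l₁, hl₁⟩ := Fintype.exists_ne_of_one_lt_card hL l₀
    have : Nonempty {a // MemY W l₀ a} := ⟨⟨_, memY_pair hm.1 hl₁⟩⟩
    simp_rw [tsum_entropy_div_tsum_weight_of_gibbs hpY (fun y => hm0.trans_le (hw y)) hsp hspw]
    exact limsup_const C

/-- **The maxentropic input process of `⟨W,L⟩`**: if `C > 0` solves `(|L|-1)·G_W(C) = 1`
and the expected weight `∑_{y∈𝒴} exp(-w(y)·C)·w(y)` is finite, then the IID process
`Y₁, Y₂, …` with values in `𝒴` and common PMF `p_Y(y) = exp(-w(y)·C)` is an input process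
of `⟨W,L⟩` (its supports `X_k` satisfy `⋃_{k≥1} X_k ⊆ ⟨W,L⟩` and `X_j ∩ X_k = ∅` for
`j ≠ k`), and its entropy rate equals `C`. -/
theorem maxentropic_input_process
    {L : Type*} [Fintype L] (hL : 2 ≤ Fintype.card L)
    (W : Set ℝ) (hWne : W.Nonempty) (hWc : W.Countable) (hWpos : ∀ ν ∈ W, 0 < ν)
    (l₀ : L)
    (C : ℝ) (hC : 0 < C)
    (hCeq : ((Fintype.card L : ℝ≥0∞) - 1) * GW W C = 1)
    (hfin : Summable fun y : {a : List (ℝ × L) // MemY W l₀ a} =>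
      Real.exp (-rlWeight (y : List (ℝ × L)) * C) * rlWeight (y : List (ℝ × L)))
    (pY : {a : List (ℝ × L) // MemY W l₀ a} → ℝ)
    (hpY : ∀ y, pY y = Real.exp (-rlWeight (y : List (ℝ × L)) * C))
    (X : ℕ → Set (List (ℝ × L)))
    (hX : ∀ k, X k = {x | ∃ yv : Fin k → {a : List (ℝ × L) // MemY W l₀ a},
      0 < ∏ i, pY (yv i) ∧ x = (List.ofFn fun i => ((yv i : List (ℝ × L)))).flatten}) :
    ((⋃ k : ℕ, X (k + 1)) ⊆ {a : List (ℝ × L) | IsRLString W a}) ∧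
    (∀ j k, 1 ≤ j → 1 ≤ k → j ≠ k → X j ∩ X k = ∅) ∧
    limsup (fun k : ℕ =>
      (∑' yv : Fin (k + 1) → {a : List (ℝ × L) // MemY W l₀ a},
        -((∏ i, pY (yv i)) * Real.log (∏ i, pY (yv i)))) /
      (∑' yv : Fin (k + 1) → {a : List (ℝ × L) // MemY W l₀ a},
        (∏ i, pY (yv i)) * ∑ i, rlWeight ((yv i : List (ℝ × L))))) atTop = C :=
  maxentropic_input_process_general hL W hWne hWpos l₀ C hC hCeq hfin pY hpY X hX
end
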